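/- arXiv:2201.11297 — 14 statements merged into one kernel-verified Lean document; each statement's English description precedes it below -/
import Mathlib

section
/- Upward propagation: let v : Fin n → ℝ and let z = (Gᵀ)⁻¹ · v (matrix–vector product). Then for every node i, z i = (v i − Σ_{j ∈ C_i} (G j i) · z j) / (G i i); in particular, if i is a leaf then z i = v i / (G i i). -/
open Matrix Finset

/-- Upward propagation: if `z = (Gᵀ)⁻¹ ⬝ v`, then each `z i` is obtained from `v i` and the
values of `z` at the children of `i`; in particular `z i = v i / G i i` at a leaf. -/
theorem generationMatrix_upward_propagation (n : ℕ) [NeZero n]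
    (f : Fin n → Fin n) (hf0 : f 0 = 0) (hf : ∀ i : Fin n, i ≠ 0 → f i < i)
    (w u : Fin n → ℝ) (hw : ∀ i, w i ≠ 0) (hu : ∀ i : Fin n, i ≠ 0 → u i ≠ 0)
    (G : Matrix (Fin n) (Fin n) ℝ)
    (hG : ∀ i j, G i j =
      if i = j then w i else if i ≠ 0 ∧ j = f i then -u i else 0)
    (v z : Fin n → ℝ) (hz : z = (Gᵀ)⁻¹.mulVec v) :
    (∀ i : Fin n,
      z i = (v i - ∑ j ∈ Finset.univ.filter (fun j : Fin n => j ≠ 0 ∧ f j = i),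
        G j i * z j) / G i i) ∧
    (∀ i : Fin n, (Finset.univ.filter (fun j : Fin n => j ≠ 0 ∧ f j = i)) = ∅ →
      z i = v i / G i i) := by
  have hGlow : ∀ i j : Fin n, i < j → G i j = 0 := by
    intro i j hij
    rw [hG, if_neg (by exact fun h => absurd h (ne_of_lt hij)), if_neg]
    rintro ⟨hi, hj⟩
    have h1 := hf i hi
    rw [hj] at hij
    exact absurd hij (not_lt.mpr h1.le)
  have hGii : ∀ i, G i i = w i := fun i => by rw [hG, if_pos rfl]
  have hdet : IsUnit Gᵀ.det := by
    rw [Matrix.det_transpose, Matrix.det_of_lowerTriangular G hGlow]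
    exact (Finset.prod_ne_zero_iff.mpr fun i _ => by rw [hGii]; exact hw i).isUnit
  have hsum : ∀ i, ∑ j, G j i * z j = v i := by
    intro i
    have hmv : Gᵀ.mulVec z = v := by
      rw [hz, Matrix.mulVec_mulVec, Matrix.mul_nonsing_inv _ hdet, Matrix.one_mulVec]
    have := congrFun hmv i
    simpa [Matrix.mulVec, dotProduct, Matrix.transpose_apply] using this
  have key : ∀ i : Fin n,
      z i = (v i - ∑ j ∈ Finset.univ.filter (fun j : Fin n => j ≠ 0 ∧ f j = i),
        G j i * z j) / G i i := by
    intro i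
    set S := Finset.univ.filter (fun j : Fin n => j ≠ 0 ∧ f j = i) with hS
    have hsub : S ⊆ Finset.univ.erase i := by
      intro j hj
      rw [hS, Finset.mem_filter] at hj
      refine Finset.mem_erase.mpr ⟨?_, Finset.mem_univ _⟩
      obtain ⟨-, hj0, hji⟩ := hj
      have := hf j hj0
      rw [hji] at this
      exact fun h => absurd this (h ▸ lt_irrefl _)
    have hzero : ∀ j ∈ Finset.univ.erase i, j ∉ S → G j i * z j = 0 := by
      intro j hj hjS
      rw [hS, Finset.mem_filter] at hjS
      push_neg at hjS
      have hji : j ≠ i := (Finset.mem_erase.mp hj).1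
      rw [hG, if_neg hji, if_neg]
      · ring
      rintro ⟨hj0, hfi⟩
      have hfj : f j = i := hfi.symm
      exact absurd hfj (hjS (Finset.mem_univ _) hj0)
    have hsplit : ∑ j, G j i * z j = G i i * z i + ∑ j ∈ S, G j i * z j := by
      rw [← Finset.add_sum_erase _ _ (Finset.mem_univ i)]
      congr 1
      exact (Finset.sum_subset hsub hzero).symm
    have hvi := hsum i
    rw [hsplit] at hvi
    rw [eq_div_iff (by rw [hGii]; exact hw i)]
    linarith [hvi]
  refine ⟨key, fun i hi => ?_⟩
  have := key i
  rw [hi, Finset.sum_empty, sub_zero] at this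
  exact this
end

section
/- Downward propagation: let v : Fin n → ℝ and let z = G⁻¹ · v (matrix–vector product). Then z 0 = v 0 / (G 0 0), and for every node i ≠ 0, z i = (v i − (G i (f i)) · z (f i)) / (G i i). -/
open Matrix Finset

/-- Downward propagation: if `z = G⁻¹ ⬝ v`, then `z 0 = v 0 / G 0 0` and for `i ≠ 0`,
`z i = (v i - G i (f i) * z (f i)) / G i i`. -/
theorem generationMatrix_downward_propagation (n : ℕ) [NeZero n]
    (f : Fin n → Fin n) (hf0 : f 0 = 0) (hf : ∀ i : Fin n, i ≠ 0 → f i < i)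
    (w u : Fin n → ℝ) (hw : ∀ i, w i ≠ 0) (hu : ∀ i : Fin n, i ≠ 0 → u i ≠ 0)
    (G : Matrix (Fin n) (Fin n) ℝ)
    (hG : ∀ i j, G i j =
      if i = j then w i else if i ≠ 0 ∧ j = f i then -u i else 0)
    (v z : Fin n → ℝ) (hz : z = G⁻¹.mulVec v) :
    z 0 = v 0 / G 0 0 ∧
    ∀ i : Fin n, i ≠ 0 → z i = (v i - G i (f i) * z (f i)) / G i i := by
  have hdiag : ∀ i, G i i = w i := by
    intro i; rw [hG]; simp
  have htri : G.BlockTriangular OrderDual.toDual := by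
    intro i j hij
    rw [hG]
    have hij' : i < j := hij
    rw [if_neg (by rintro rfl; exact lt_irrefl _ hij'), if_neg]
    rintro ⟨hi0, rfl⟩
    exact absurd (lt_trans (hf i hi0) hij') (lt_irrefl _)
  have hdet : G.det ≠ 0 := by
    rw [Matrix.det_of_lowerTriangular G htri]
    exact Finset.prod_ne_zero_iff.mpr fun i _ => by rw [hdiag]; exact hw i
  have hGz : G.mulVec z = v := by
    rw [hz, Matrix.mulVec_mulVec, Matrix.mul_nonsing_inv G (isUnit_iff_ne_zero.mpr hdet),
      Matrix.one_mulVec]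
  constructor
  · have h0 : v 0 = G 0 0 * z 0 := by
      rw [← hGz]
      unfold Matrix.mulVec dotProduct
      rw [Finset.sum_eq_single 0]
      · intro b _ hb
        show G 0 b * z b = 0
        rw [hG, if_neg (fun h => hb h.symm), if_neg (by rintro ⟨h, _⟩; exact h rfl)]
        ring
      · intro h; exact absurd (Finset.mem_univ 0) h
    rw [h0, hdiag, mul_comm, mul_div_assoc, div_self (hw 0), mul_one]
  · intro i hi0
    have hfi : f i ≠ i := ne_of_lt (hf i hi0)
    have h1 : v i = G i i * z i + G i (f i) * z (f i) := by
      rw [← hGz]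
      unfold Matrix.mulVec dotProduct
      rw [← Finset.sum_subset (Finset.subset_univ {i, f i})]
      · rw [Finset.sum_pair (Ne.symm hfi)]
      · intro x _ hx
        simp only [Finset.mem_insert, Finset.mem_singleton, not_or] at hx
        show G i x * z x = 0
        rw [hG, if_neg (fun h => hx.1 h.symm), if_neg (by rintro ⟨_, rfl⟩; exact hx.2 rfl)]
        ring
    rw [h1, hdiag, add_sub_cancel_right, mul_comm, mul_div_assoc, div_self (hw i), mul_one]
end

section
/- For every Generation Matrix G = G(w,u) and all indices i, j: if (G⁻¹) i j ≠ 0 then i = j or j is a strict ancestor of i. Consequently, in the downward propagation z = G⁻¹ v the coordinate z j can depend on v i only when j = i or i is a strict ancestor of j, and in the upward propagation z = (Gᵀ)⁻¹ v the coordinate z j can depend on v i only when j = i or j is a strict ancestor of i. -/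
open Matrix Finset

/-- The inverse of a Generation Matrix is supported on ancestor relations: `(G⁻¹) i j ≠ 0`
implies `i = j` or `j` is a strict ancestor of `i`. Consequently, in downward propagation
`z = G⁻¹ v`, `z j` depends on `v i` only if `j = i` or `i` is a strict ancestor of `j`; in
upward propagation `z = (Gᵀ)⁻¹ v`, `z j` depends on `v i` only if `j = i` or `j` is a strict
ancestor of `i`. -/
theorem generationMatrix_inv_support (n : ℕ) [NeZero n]
    (f : Fin n → Fin n) (hf0 : f 0 = 0) (hf : ∀ i : Fin n, i ≠ 0 → f i < i)
    (w u : Fin n → ℝ) (hw : ∀ i, w i ≠ 0) (hu : ∀ i : Fin n, i ≠ 0 → u i ≠ 0)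
    (G : Matrix (Fin n) (Fin n) ℝ)
    (hG : ∀ i j, G i j =
      if i = j then w i else if i ≠ 0 ∧ j = f i then -u i else 0) :
    (∀ i j : Fin n, G⁻¹ i j ≠ 0 → i = j ∨ (j ≠ i ∧ ∃ k : ℕ, 1 ≤ k ∧ j = f^[k] i)) ∧
    (∀ i j : Fin n, G⁻¹ j i ≠ 0 → j = i ∨ (i ≠ j ∧ ∃ k : ℕ, 1 ≤ k ∧ i = f^[k] j)) ∧
    (∀ i j : Fin n, (Gᵀ)⁻¹ j i ≠ 0 → j = i ∨ (j ≠ i ∧ ∃ k : ℕ, 1 ≤ k ∧ j = f^[k] i)) := by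
  -- G is lower triangular
  have htri : G.BlockTriangular OrderDual.toDual := by
    intro i j hij
    have hij' : i < j := hij
    rw [hG]
    rw [if_neg (by exact fun h => absurd h (ne_of_lt hij')), if_neg]
    rintro ⟨hi0, hji⟩
    exact absurd (hji ▸ hij') (not_lt_of_gt (hf i hi0))
  have hdet : G.det ≠ 0 := by
    rw [Matrix.det_of_lowerTriangular G htri]
    refine Finset.prod_ne_zero_iff.mpr fun i _ => ?_
    rw [hG, if_pos rfl]; exact hw i
  have hmul : G * G⁻¹ = 1 := Matrix.mul_nonsing_inv G (Ne.isUnit hdet)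
  -- row recursion
  have hrow : ∀ i j : Fin n, w i * G⁻¹ i j +
      (if i = 0 then 0 else -u i * G⁻¹ (f i) j) = if i = j then 1 else 0 := by
    intro i j
    have h := congrFun (congrFun hmul i) j
    rw [Matrix.mul_apply] at h
    rw [Matrix.one_apply] at h
    rw [← h]
    by_cases hi0 : i = 0
    · subst hi0
      rw [if_pos rfl, add_zero]
      rw [Finset.sum_eq_single 0]
      · rw [hG, if_pos rfl]
      · intro k _ hk
        rw [hG, if_neg (fun h => hk h.symm), if_neg (by simp)]
        ring
      · simp
    · rw [if_neg hi0]
      have hfi : f i ≠ i := ne_of_lt (hf i hi0)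
      have hz : ∀ k ∈ Finset.univ, k ∉ ({i, f i} : Finset (Fin n)) →
          G i k * G⁻¹ k j = 0 := by
        intro k _ hk
        simp only [Finset.mem_insert, Finset.mem_singleton, not_or] at hk
        rw [hG, if_neg (fun h => hk.1 h.symm), if_neg (fun h => hk.2 h.2)]
        ring
      rw [← Finset.sum_subset (Finset.subset_univ {i, f i}) hz,
        Finset.sum_pair (Ne.symm hfi)]
      rw [hG, hG, if_pos rfl, if_neg (fun h => hfi h.symm), if_pos ⟨hi0, rfl⟩]
  -- main claim by strong induction on i
  have main : ∀ i j : Fin n, G⁻¹ i j ≠ 0 →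
      i = j ∨ (j ≠ i ∧ ∃ k : ℕ, 1 ≤ k ∧ j = f^[k] i) := by
    have H : ∀ m : ℕ, ∀ i j : Fin n, (i : ℕ) = m → G⁻¹ i j ≠ 0 →
        i = j ∨ (j ≠ i ∧ ∃ k : ℕ, 1 ≤ k ∧ j = f^[k] i) := by
      intro m
      induction m using Nat.strong_induction_on with
      | _ m ih =>
        intro i j him hne
        by_cases hij : i = j
        · exact Or.inl hij
        have hr := hrow i j
        rw [if_neg hij] at hr
        by_cases hi0 : i = 0
        · exfalso
          rw [if_pos hi0, add_zero] at hr
          exact hne ((mul_eq_zero.mp hr).resolve_left (hw i))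
        · rw [if_neg hi0] at hr
          have hfij : G⁻¹ (f i) j ≠ 0 := by
            intro h
            rw [h, mul_zero, add_zero] at hr
            exact hne ((mul_eq_zero.mp hr).resolve_left (hw i))
          have hlt : ((f i : Fin n) : ℕ) < m := him ▸ (hf i hi0)
          rcases ih _ hlt (f i) j rfl hfij with h | ⟨_, k, hk1, hk⟩
          · exact Or.inr ⟨fun h' => hij h'.symm, 1, le_refl 1, by simpa using h.symm⟩
          · refine Or.inr ⟨fun h' => hij h'.symm, k + 1, Nat.le_add_left 1 k, ?_⟩
            rw [hk, Function.iterate_succ_apply]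
    intro i j
    exact H i i j rfl
  refine ⟨main, fun i j h => main j i h, fun i j h => ?_⟩
  rw [← Matrix.transpose_nonsing_inv, Matrix.transpose_apply] at h
  exact (main i j h).imp_left Eq.symm
end

section
/- Let z = (G_Tᵀ)⁻¹ · 𝟙, where 𝟙 is the all-ones vector in ℝⁿ. Then for every node i, z i equals the number of nodes in the subtree rooted at i, i.e., z i = |{j : j = i ∨ i is a strict ancestor of j}|. -/
open Matrix Finset

open scoped Classical in
/-- If `z = (G_Tᵀ)⁻¹ ⬝ 𝟙`, then `z i` equals the number of nodes in the subtree rooted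
at `i`, i.e. the number of nodes `j` with `j = i` or `i` a strict ancestor of `j`. -/
theorem structureMatrix_subtree_size (n : ℕ) [NeZero n]
    (f : Fin n → Fin n) (hf0 : f 0 = 0) (hf : ∀ i : Fin n, i ≠ 0 → f i < i)
    (GT : Matrix (Fin n) (Fin n) ℝ)
    (hGT : ∀ i j, GT i j =
      if i = j then 1 else if i ≠ 0 ∧ j = f i then -1 else 0)
    (z : Fin n → ℝ) (hz : z = (GTᵀ)⁻¹.mulVec (fun _ => 1)) :
    ∀ i : Fin n,
      z i = ((Finset.univ.filter fun j : Fin n =>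
        j = i ∨ (i ≠ j ∧ ∃ k : ℕ, 1 ≤ k ∧ i = f^[k] j)).card : ℝ) := by
  classical
  -- basic facts about `f`
  have hfle : ∀ x : Fin n, f x ≤ x := by
    intro x
    by_cases hx : x = 0
    · subst hx; simp [hf0]
    · exact (hf x hx).le
  have hiter : ∀ (k : ℕ) (x : Fin n), f^[k] x ≤ x := by
    intro k
    induction k with
    | zero => simp
    | succ k ih =>
      intro x
      rw [Function.iterate_succ_apply]
      exact (ih (f x)).trans (hfle x)
  -- the subtree of a node and the children of a node
  set S : Fin n → Finset (Fin n) := fun i => Finset.univ.filter fun j : Fin n =>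
        j = i ∨ (i ≠ j ∧ ∃ k : ℕ, 1 ≤ k ∧ i = f^[k] j) with hSdef
  set C : Fin n → Finset (Fin n) := fun i => Finset.univ.filter fun j : Fin n =>
        j ≠ 0 ∧ f j = i with hCdef
  have memS : ∀ i m : Fin n, m ∈ S i ↔
      (m = i ∨ (i ≠ m ∧ ∃ k : ℕ, 1 ≤ k ∧ i = f^[k] m)) := by
    intro i m; simp [hSdef]
  have memC : ∀ i j : Fin n, j ∈ C i ↔ (j ≠ 0 ∧ f j = i) := by
    intro i j; simp [hCdef]
  -- a child is strictly larger than its parent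
  have hchild_lt : ∀ i j : Fin n, j ∈ C i → i < j := by
    intro i j hj
    rw [memC] at hj
    rw [← hj.2]
    exact hf j hj.1
  -- a member of the subtree of j is at least j
  have hmemS_le : ∀ j m : Fin n, m ∈ S j → j ≤ m := by
    intro j m hm
    rw [memS] at hm
    rcases hm with rfl | ⟨_, k, _, hk⟩
    · exact le_refl _
    · rw [hk]; exact hiter k m
  -- a member of the subtree of j has j as an iterate
  have hmemS_iter : ∀ j m : Fin n, m ∈ S j → ∃ a : ℕ, j = f^[a] m := by
    intro j m hm
    rw [memS] at hm
    rcases hm with rfl | ⟨_, k, _, hk⟩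
    · exact ⟨0, rfl⟩
    · exact ⟨k, hk⟩
  -- decomposition of the subtree of i
  have hdecomp : ∀ i : Fin n, S i = insert i ((C i).biUnion S) := by
    intro i
    ext m
    rw [memS, Finset.mem_insert, Finset.mem_biUnion]
    constructor
    · rintro (rfl | ⟨hne, k, hk1, hk⟩)
      · exact Or.inl rfl
      · right
        have hex : ∃ t, f^[t] m = i := ⟨k, hk.symm⟩
        set t := Nat.find hex with ht
        have htspec : f^[t] m = i := Nat.find_spec hex
        have ht1 : 1 ≤ t := by
          rcases Nat.eq_zero_or_pos t with h0 | h
          · exfalso; apply hne; rw [h0] at htspec; simpa using htspec.symm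
          · exact h
        have htsucc : f (f^[t-1] m) = i := by
          rw [← Function.iterate_succ_apply' f (t-1) m, Nat.succ_eq_add_one,
            Nat.sub_add_cancel ht1]
          exact htspec
        refine ⟨f^[t-1] m, ?_, ?_⟩
        · rw [memC]
          refine ⟨?_, htsucc⟩
          intro h0
          have hi0 : i = 0 := by rw [h0, hf0] at htsucc; exact htsucc.symm
          have : f^[t-1] m = i := by rw [h0, hi0]
          exact Nat.find_min hex (Nat.sub_lt ht1 one_pos) (by rw [this])
        · rw [memS]
          by_cases hjm : f^[t-1] m = m
          · exact Or.inl hjm.symm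
          · right
            have h1 : 1 ≤ t - 1 := by
              by_contra h
              apply hjm
              have ht0 : t - 1 = 0 := by omega
              rw [ht0]; rfl
            exact ⟨hjm, t - 1, h1, rfl⟩
    · rintro (rfl | ⟨j, hj, hm⟩)
      · exact Or.inl rfl
      · have hij : i < j := hchild_lt i j hj
        have hjm : j ≤ m := hmemS_le j m hm
        have hfj : f j = i := ((memC i j).mp hj).2
        right
        refine ⟨(lt_of_lt_of_le hij hjm).ne, ?_⟩
        rcases hmemS_iter j m hm with ⟨a, ha⟩
        refine ⟨a + 1, Nat.le_add_left 1 a, ?_⟩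
        rw [Function.iterate_succ_apply' f a m, ← ha, hfj]
  -- i is not in the subtree of any of its children
  have hnotmem : ∀ i : Fin n, i ∉ (C i).biUnion S := by
    intro i hi
    rcases Finset.mem_biUnion.mp hi with ⟨j, hj, hij⟩
    exact absurd (hmemS_le j i hij) (not_le.mpr (hchild_lt i j hj))
  -- subtrees of distinct children are disjoint
  have hdisj : ∀ i : Fin n, ∀ j ∈ C i, ∀ j' ∈ C i, j ≠ j' → Disjoint (S j) (S j') := by
    intro i j hj j' hj' hne
    rw [Finset.disjoint_left]
    intro m hmj hmj'
    rcases hmemS_iter j m hmj with ⟨a, ha⟩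
    rcases hmemS_iter j' m hmj' with ⟨b, hb⟩
    -- wlog a ≤ b
    have key : ∀ (u v : Fin n) (a b : ℕ), u ∈ C i → v ∈ C i → u = f^[a] m → v = f^[b] m →
        a ≤ b → u = v := by
      intro u v a b hu hv hua hvb hab
      rcases Nat.eq_or_lt_of_le hab with rfl | hlt
      · rw [hua, hvb]
      · exfalso
        have hstep : v = f^[b - a - 1] (f u) := by
          rw [hvb, hua, ← Function.iterate_succ_apply f (b-a-1) (f^[a] m),
            ← Function.iterate_add_apply]
          congr 1
          omega
        have hfu : f u = i := ((memC i u).mp hu).2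
        rw [hfu] at hstep
        have : v ≤ i := hstep ▸ hiter (b - a - 1) i
        exact absurd this (not_le.mpr (hchild_lt i v hv))
    rcases Nat.le_total a b with hab | hab
    · exact hne (key j j' a b hj hj' ha hb hab)
    · exact hne ((key j' j b a hj' hj hb ha hab).symm)
  -- the recursion for subtree sizes
  have card_rec : ∀ i : Fin n, ((S i).card : ℝ) = 1 + ∑ j ∈ C i, ((S j).card : ℝ) := by
    intro i
    rw [hdecomp i, Finset.card_insert_of_notMem (hnotmem i),
      Finset.card_biUnion (hdisj i)]
    push_cast
    ring
  -- s is the subtree size vector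
    -- show GTᵀ.mulVec s = 1
  set s : Fin n → ℝ := fun i => ((S i).card : ℝ) with hsdef
  have hmul : GTᵀ.mulVec s = (fun _ => (1:ℝ)) := by
    funext i
    have : GTᵀ.mulVec s i = ∑ j, GT j i * s j := by
      simp [Matrix.mulVec, dotProduct, Matrix.transpose_apply]
    rw [this]
    have hpt : ∀ j : Fin n, GT j i * s j =
        (if j = i then s j else 0) + (if j ∈ C i then -s j else 0) := by
      intro j
      rw [hGT j i]
      by_cases hji : j = i
      · subst hji
        have hjC : j ∉ C j := by
          rw [memC]; rintro ⟨hj0, hjf⟩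
          have h := hf j hj0
          rw [hjf] at h
          exact lt_irrefl j h
        have hcond : ¬ (j ≠ 0 ∧ j = f j) := by
          rintro ⟨hj0, hjf⟩
          have h := hf j hj0
          rw [← hjf] at h
          exact lt_irrefl j h
        rw [if_pos rfl, if_pos rfl, if_neg hjC]
        ring
      · by_cases hjc : j ≠ 0 ∧ i = f j
        · have hjC : j ∈ C i := by rw [memC]; exact ⟨hjc.1, hjc.2.symm⟩
          rw [if_neg hji, if_pos hjc, if_neg hji, if_pos hjC]
          ring
        · have hjC : j ∉ C i := by
            rw [memC]; rintro ⟨hj0, hjf⟩; exact hjc ⟨hj0, hjf.symm⟩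
          simp [hji, hjc, hjC]
    rw [Finset.sum_congr rfl (fun j _ => hpt j), Finset.sum_add_distrib,
      Finset.sum_ite_eq' Finset.univ i s, ← Finset.sum_filter]
    have hCi : Finset.univ.filter (fun j => j ∈ C i) = C i := by
      ext j; simp
    rw [hCi]
    simp only [if_pos (Finset.mem_univ i)]
    rw [Finset.sum_neg_distrib]
    rw [hsdef]
    have := card_rec i
    simp only at this ⊢
    rw [this]
    ring
  -- GT is invertible
  have hdet : GTᵀ.det ≠ 0 := by
    rw [Matrix.det_transpose]
    have htri : GT.BlockTriangular OrderDual.toDual := by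
      intro a b hab
      have hab' : a < b := hab
      rw [hGT a b]
      have h1 : a ≠ b := hab'.ne
      have h2 : ¬ (a ≠ 0 ∧ b = f a) := by
        rintro ⟨ha0, hba⟩
        exact absurd (hba ▸ hf a ha0) (not_lt.mpr hab'.le)
      simp [h1, h2]
    rw [Matrix.det_of_lowerTriangular GT htri]
    have : ∀ i : Fin n, GT i i = 1 := by
      intro i; rw [hGT i i]; simp
    rw [Finset.prod_congr rfl (fun i _ => this i)]
    simp
  -- conclude
  have hzs : z = s := by
    rw [hz, ← hmul, Matrix.mulVec_mulVec, Matrix.nonsing_inv_mul GTᵀ (isUnit_iff_ne_zero.mpr hdet),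
      Matrix.one_mulVec]
  intro i
  rw [hzs]
end

section
/- For all nodes i and j, the (i,j) entry of G_T⁻¹ equals 1 if i = j or j is a strict ancestor of i, and equals 0 otherwise. -/
open Matrix Finset

open scoped Classical in
/-- The `(i,j)` entry of `G_T⁻¹` is `1` if `i = j` or `j` is a strict ancestor of `i`,
and `0` otherwise. -/
theorem structureMatrix_inv_entries (n : ℕ) [NeZero n]
    (f : Fin n → Fin n) (hf0 : f 0 = 0) (hf : ∀ i : Fin n, i ≠ 0 → f i < i)
    (GT : Matrix (Fin n) (Fin n) ℝ)
    (hGT : ∀ i j, GT i j =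
      if i = j then 1 else if i ≠ 0 ∧ j = f i then -1 else 0) :
    ∀ i j : Fin n, GT⁻¹ i j =
      if i = j ∨ (j ≠ i ∧ ∃ k : ℕ, 1 ≤ k ∧ j = f^[k] i) then 1 else 0 := by
  classical
  -- basic facts
  have hle : ∀ x : Fin n, f x ≤ x := by
    intro x
    by_cases h : x = 0
    · simp [h, hf0]
    · exact (hf x h).le
  have hiter : ∀ (k : ℕ) (x : Fin n), f^[k] x ≤ x := by
    intro k
    induction k with
    | zero => intro x; simp
    | succ k ih =>
      intro x
      rw [Function.iterate_succ_apply']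
      exact le_trans (hle _) (ih x)
  -- the candidate inverse
  set A : Matrix (Fin n) (Fin n) ℝ := fun i j =>
    if i = j ∨ (j ≠ i ∧ ∃ k : ℕ, 1 ≤ k ∧ j = f^[k] i) then 1 else 0 with hA
  have hAalt : ∀ i j, A i j = if (∃ k : ℕ, j = f^[k] i) then 1 else 0 := by
    intro i j
    rw [hA]
    refine if_congr ?_ rfl rfl
    constructor
    · rintro (rfl | ⟨-, k, -, hk⟩)
      · exact ⟨0, rfl⟩
      · exact ⟨k, hk⟩
    · rintro ⟨k, hk⟩
      by_cases h : i = j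
      · exact Or.inl h
      · refine Or.inr ⟨fun hji => h hji.symm, k, ?_, hk⟩
        rcases Nat.eq_zero_or_pos k with rfl | hpos
        · exact absurd hk.symm h
        · exact hpos
  have key : GT * A = 1 := by
    ext i j
    rw [Matrix.mul_apply]
    by_cases hi : i = 0
    · subst hi
      rw [Finset.sum_eq_single (0 : Fin n)]
      · have hiff : (∃ k : ℕ, j = f^[k] 0) ↔ (0 : Fin n) = j := by
          constructor
          · rintro ⟨k, hk⟩
            rw [Function.iterate_fixed hf0] at hk
            exact hk.symm
          · rintro rfl; exact ⟨0, rfl⟩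
        rw [hGT, hAalt, if_pos rfl, one_mul, Matrix.one_apply]
        by_cases h : (0 : Fin n) = j
        · rw [if_pos (hiff.mpr h), if_pos h]
        · rw [if_neg (fun h' => h (hiff.mp h')), if_neg h]
      · intro b _ hb
        rw [hGT, if_neg (Ne.symm hb), if_neg (by simp), zero_mul]
      · simp
    · have hfi : f i ≠ i := (hf i hi).ne
      have hsub : (Finset.univ : Finset (Fin n)).sum (fun k => GT i k * A k j)
          = ({i, f i} : Finset (Fin n)).sum (fun k => GT i k * A k j) := by
        symm
        apply Finset.sum_subset (Finset.subset_univ _)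
        intro k _ hk
        simp only [Finset.mem_insert, Finset.mem_singleton, not_or] at hk
        rw [hGT, if_neg (fun h => hk.1 h.symm), if_neg (fun h => hk.2 h.2), zero_mul]
      rw [hsub, Finset.sum_pair (Ne.symm hfi)]
      have hg1 : GT i i = 1 := by rw [hGT]; simp
      have hg2 : GT i (f i) = -1 := by rw [hGT, if_neg (Ne.symm hfi), if_pos ⟨hi, rfl⟩]
      rw [hg1, hg2, one_mul, neg_one_mul, hAalt, hAalt, Matrix.one_apply]
      by_cases hij : i = j
      · subst hij
        have h1 : (∃ k : ℕ, i = f^[k] i) := ⟨0, rfl⟩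
        have h2 : ¬(∃ k : ℕ, i = f^[k] (f i)) := by
          rintro ⟨k, hk⟩
          have : f^[k] (f i) < i := lt_of_le_of_lt (hiter k (f i)) (hf i hi)
          rw [← hk] at this
          exact absurd this (lt_irrefl i)
        rw [if_pos h1, if_neg h2, if_pos rfl]
        ring
      · have : (∃ k : ℕ, j = f^[k] i) ↔ (∃ k : ℕ, j = f^[k] (f i)) := by
          constructor
          · rintro ⟨k, hk⟩
            rcases Nat.eq_zero_or_pos k with rfl | hpos
            · exact absurd hk.symm hij
            · obtain ⟨m, rfl⟩ := Nat.exists_eq_succ_of_ne_zero hpos.ne'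
              exact ⟨m, by rwa [Function.iterate_succ_apply] at hk⟩
          · rintro ⟨k, hk⟩
            exact ⟨k + 1, by rwa [Function.iterate_succ_apply]⟩
        rw [if_neg hij]
        by_cases h : ∃ k : ℕ, j = f^[k] i
        · rw [if_pos h, if_pos (this.mp h)]; ring
        · rw [if_neg h, if_neg (fun h' => h (this.mpr h'))]; ring
  intro i j
  rw [Matrix.inv_eq_right_inv key]
end

section
/- Let M = G_T · G_Tᵀ. Then M 0 0 = 1, and for every pair of indices (i,j) ≠ (0,0): M i j = 1 if and only if i and j are siblings, i.e., i ≠ j, i ≠ 0, j ≠ 0, and f i = f j. -/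
open Matrix Finset

/-!
Write `G_T = 1 - P`, where row `i` of `P` is the unit vector at the parent `f i` and row `0`
is zero. Then `G_T G_Tᵀ = 1 - P - Pᵀ + P Pᵀ`, and `(P Pᵀ) i j` is `1` exactly when `i` and `j`
are non-root nodes with a common parent. Off the diagonal the two middle terms are `≤ 0`, so an
entry equal to `1` must come from `P Pᵀ`, and for siblings the middle terms vanish because no
node is its own parent. On the diagonal the entries are `1` at the root and `2` elsewhere.
-/

variable {ι : Type*} [DecidableEq ι]

def parentMatrix (R : Type*) [Zero R] [One R] (r : ι) (f : ι → ι) : Matrix ι ι R :=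
  of fun i k => if i ≠ r ∧ k = f i then 1 else 0

def structureMatrix (R : Type*) [Ring R] (r : ι) (f : ι → ι) : Matrix ι ι R :=
  1 - parentMatrix R r f

variable {R : Type*} (r : ι) (f : ι → ι)

lemma structureMatrix_apply [Ring R] (hf : ∀ i, i ≠ r → f i ≠ i) (i j : ι) :
    structureMatrix R r f i j = if i = j then 1 else if i ≠ r ∧ j = f i then -1 else 0 := by
  rw [structureMatrix, Matrix.sub_apply, one_apply, parentMatrix, of_apply]
  by_cases hij : i = j
  · subst hij
    by_cases hi : i = r
    · simp [hi]
    · simp [hi, (hf i hi).symm]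
  · split_ifs <;> simp_all

variable [Fintype ι]

lemma parentMatrix_mul_transpose_apply [NonAssocSemiring R] (i j : ι) :
    (parentMatrix R r f * (parentMatrix R r f)ᵀ) i j =
      if i ≠ r ∧ j ≠ r ∧ f i = f j then 1 else 0 := by
  simp only [mul_apply, transpose_apply, parentMatrix, of_apply, ite_and, ite_mul, one_mul,
    zero_mul]
  by_cases hi : i = r
  · simp [hi]
  · simp only [if_pos hi, Finset.sum_ite_eq', Finset.mem_univ, if_true]

variable [CommRing R]

lemma structureMatrix_mul_transpose_apply (i j : ι) :
    (structureMatrix R r f * (structureMatrix R r f)ᵀ) i j =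
      (if i = j then 1 else 0) - (if j ≠ r ∧ i = f j then 1 else 0)
        - (if i ≠ r ∧ j = f i then 1 else 0) + (if i ≠ r ∧ j ≠ r ∧ f i = f j then 1 else 0) := by
  rw [structureMatrix, transpose_sub, transpose_one, sub_mul, mul_sub, mul_sub]
  simp only [one_mul, mul_one, Matrix.sub_apply, parentMatrix_mul_transpose_apply, one_apply,
    transpose_apply]
  simp only [parentMatrix, of_apply]
  ring

lemma structureMatrix_mul_transpose_apply_root :
    (structureMatrix R r f * (structureMatrix R r f)ᵀ) r r = 1 := by
  simp [structureMatrix_mul_transpose_apply]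

lemma structureMatrix_mul_transpose_apply_self {i : ι} (hi : i ≠ r) (hfi : f i ≠ i) :
    (structureMatrix R r f * (structureMatrix R r f)ᵀ) i i = 2 := by
  norm_num [structureMatrix_mul_transpose_apply, hi, hfi.symm]

lemma structureMatrix_mul_transpose_apply_of_siblings {i j : ι} (hij : i ≠ j) (hi : i ≠ r)
    (hj : j ≠ r) (hfij : f i = f j) (hfi : f i ≠ i) (hfj : f j ≠ j) :
    (structureMatrix R r f * (structureMatrix R r f)ᵀ) i j = 1 := by
  rw [structureMatrix_mul_transpose_apply, if_neg hij, if_neg (fun h => hfi (hfij ▸ h.2.symm)),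
    if_neg (fun h => hfj (hfij ▸ h.2.symm)), if_pos ⟨hi, hj, hfij⟩]
  ring

lemma structureMatrix_mul_transpose_apply_nonpos [PartialOrder R] [IsOrderedRing R] {i j : ι}
    (hij : i ≠ j) (hns : ¬(i ≠ r ∧ j ≠ r ∧ f i = f j)) :
    (structureMatrix R r f * (structureMatrix R r f)ᵀ) i j ≤ 0 := by
  rw [structureMatrix_mul_transpose_apply, if_neg hij, if_neg hns]
  have h₁ : (0 : R) ≤ if j ≠ r ∧ i = f j then 1 else 0 := by split_ifs <;> simp
  have h₂ : (0 : R) ≤ if i ≠ r ∧ j = f i then 1 else 0 := by split_ifs <;> simp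
  simp only [zero_sub, add_zero]
  exact sub_nonpos_of_le ((neg_nonpos.mpr h₁).trans h₂)

theorem structureMatrix_sibling_indicator_general (n : ℕ) [NeZero n]
    (f : Fin n → Fin n) (hf : ∀ i : Fin n, i ≠ 0 → f i < i)
    (GT : Matrix (Fin n) (Fin n) ℝ)
    (hGT : ∀ i j, GT i j =
      if i = j then 1 else if i ≠ 0 ∧ j = f i then -1 else 0)
    (M : Matrix (Fin n) (Fin n) ℝ) (hM : M = GT * GTᵀ) :
    M 0 0 = 1 ∧
    ∀ i j : Fin n, (i, j) ≠ ((0 : Fin n), (0 : Fin n)) →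
      (M i j = 1 ↔ (i ≠ j ∧ i ≠ 0 ∧ j ≠ 0 ∧ f i = f j)) := by
  have hfne (i : Fin n) (hi : i ≠ 0) : f i ≠ i := (hf i hi).ne
  have hG : GT = structureMatrix ℝ 0 f := by
    ext i j
    rw [hGT, structureMatrix_apply 0 f hfne]
  subst hM hG
  refine ⟨structureMatrix_mul_transpose_apply_root 0 f, fun i j hij => ?_⟩
  by_cases hii : i = j
  · subst hii
    have hi : i ≠ 0 := fun h => hij (by rw [h])
    rw [structureMatrix_mul_transpose_apply_self 0 f hi (hfne i hi)]
    exact iff_of_false (by norm_num) (fun h => h.1 rfl)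
  by_cases hs : i ≠ 0 ∧ j ≠ 0 ∧ f i = f j
  · obtain ⟨hi, hj, hfij⟩ := hs
    exact iff_of_true (structureMatrix_mul_transpose_apply_of_siblings 0 f hii hi hj hfij
      (hfne i hi) (hfne j hj)) ⟨hii, hi, hj, hfij⟩
  · have := structureMatrix_mul_transpose_apply_nonpos (R := ℝ) 0 f hii hs
    exact iff_of_false (by linarith) (fun h => hs h.2)

/-- Let `M = G_T ⬝ G_Tᵀ`. Then `M 0 0 = 1`, and for `(i,j) ≠ (0,0)`, `M i j = 1` iff
`i` and `j` are siblings (distinct non-root nodes with the same parent). -/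
theorem structureMatrix_sibling_indicator (n : ℕ) [NeZero n]
    (f : Fin n → Fin n) (hf0 : f 0 = 0) (hf : ∀ i : Fin n, i ≠ 0 → f i < i)
    (GT : Matrix (Fin n) (Fin n) ℝ)
    (hGT : ∀ i j, GT i j =
      if i = j then 1 else if i ≠ 0 ∧ j = f i then -1 else 0)
    (M : Matrix (Fin n) (Fin n) ℝ) (hM : M = GT * GTᵀ) :
    M 0 0 = 1 ∧
    ∀ i j : Fin n, (i, j) ≠ ((0 : Fin n), (0 : Fin n)) →
      (M i j = 1 ↔ (i ≠ j ∧ i ≠ 0 ∧ j ≠ 0 ∧ f i = f j)) :=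
  structureMatrix_sibling_indicator_general n f hf GT hGT M hM
end

section
/- For all nodes i and j, the (i,j) entry of (G_Tᵀ · G_T)⁻¹ equals the number of common ancestors-or-self of i and j, i.e., the cardinality of {k : (k = i ∨ k is a strict ancestor of i) ∧ (k = j ∨ k is a strict ancestor of j)}. In particular, the (i,i) entry equals depth i. -/
open Matrix Finset

open scoped Classical in
/-- The `(i,j)` entry of `(G_Tᵀ ⬝ G_T)⁻¹` equals the number of common ancestors-or-self
of `i` and `j`; in particular the `(i,i)` entry equals the depth of `i`. -/
theorem structureMatrix_common_ancestors (n : ℕ) [NeZero n]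
    (f : Fin n → Fin n) (hf0 : f 0 = 0) (hf : ∀ i : Fin n, i ≠ 0 → f i < i)
    (GT : Matrix (Fin n) (Fin n) ℝ)
    (hGT : ∀ i j, GT i j =
      if i = j then 1 else if i ≠ 0 ∧ j = f i then -1 else 0)
    (depth : Fin n → ℕ) (hdepth0 : depth 0 = 1)
    (hdepth : ∀ i : Fin n, i ≠ 0 → depth i = depth (f i) + 1)
    (M : Matrix (Fin n) (Fin n) ℝ) (hM : M = (GTᵀ * GT)⁻¹) :
    (∀ i j : Fin n, M i j =
      ((Finset.univ.filter fun k : Fin n =>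
        (k = i ∨ (k ≠ i ∧ ∃ a : ℕ, 1 ≤ a ∧ k = f^[a] i)) ∧
        (k = j ∨ (k ≠ j ∧ ∃ a : ℕ, 1 ≤ a ∧ k = f^[a] j))).card : ℝ)) ∧
    (∀ i : Fin n, M i i = (depth i : ℝ)) := by
  classical
  -- iterates only decrease
  have hle : ∀ i : Fin n, f i ≤ i := by
    intro i
    by_cases h : i = 0
    · subst h; rw [hf0]
    · exact (hf i h).le
  have iter_le : ∀ (a : ℕ) (i : Fin n), f^[a] i ≤ i := by
    intro a
    induction a with
    | zero => intro i; simp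
    | succ a ih =>
      intro i
      rw [Function.iterate_succ_apply]
      exact le_trans (ih (f i)) (hle i)
  set anc : Fin n → Fin n → Prop :=
    fun i k => k = i ∨ ∃ a : ℕ, 1 ≤ a ∧ k = f^[a] i with hanc
  have ancSelf : ∀ i, anc i i := fun i => Or.inl rfl
  have ancLe : ∀ i k, anc i k → k ≤ i := by
    rintro i k (rfl | ⟨a, _, rfl⟩)
    · exact le_refl _
    · exact iter_le a i
  have notAncParent : ∀ i : Fin n, i ≠ 0 → ¬ anc (f i) i := by
    intro i hi h
    exact absurd (ancLe _ _ h) (not_le.mpr (hf i hi))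
  have ancStep : ∀ (i : Fin n), ∀ k, anc i k ↔ k = i ∨ anc (f i) k := by
    intro i k
    constructor
    · rintro (rfl | ⟨a, ha, rfl⟩)
      · exact Or.inl rfl
      · obtain ⟨b, rfl⟩ : ∃ b, a = b + 1 := ⟨a - 1, by omega⟩
        rw [Function.iterate_succ_apply]
        cases b with
        | zero => exact Or.inr (Or.inl (by simp))
        | succ c => exact Or.inr (Or.inr ⟨c + 1, by omega, rfl⟩)
    · rintro (rfl | rfl | ⟨a, ha, rfl⟩)
      · exact ancSelf _
      · exact Or.inr ⟨1, le_refl _, by simp⟩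
      · exact Or.inr ⟨a + 1, by omega, by rw [Function.iterate_succ_apply]⟩
  have anc0 : ∀ k, anc 0 k ↔ k = 0 := by
    intro k
    constructor
    · rintro (rfl | ⟨a, _, rfl⟩)
      · rfl
      · rw [Function.iterate_fixed hf0]
    · rintro rfl; exact ancSelf _
  set B : Matrix (Fin n) (Fin n) ℝ :=
    Matrix.of (fun i k => if anc i k then 1 else 0) with hB
  have hBapp : ∀ i k, B i k = if anc i k then 1 else 0 := fun i k => rfl
  -- B is a right inverse of GT
  have hGTB : GT * B = 1 := by
    ext i j
    rw [Matrix.mul_apply]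
    by_cases hi : i = 0
    · subst hi
      have : ∀ k : Fin n, GT 0 k * B k j = if k = 0 then B 0 j else 0 := by
        intro k
        rw [hGT]
        by_cases hk : k = 0
        · subst hk; simp
        · simp [Ne.symm hk, hk]
      rw [Finset.sum_congr rfl (fun k _ => this k), Finset.sum_ite_eq' Finset.univ]
      simp [hBapp, anc0, Matrix.one_apply, eq_comm]
    · have hfi : f i ≠ i := ne_of_lt (hf i hi)
      have hsplit : ∀ k : Fin n, GT i k * B k j =
          (if k = i then B i j else 0) + (if k = f i then -B (f i) j else 0) := by
        intro k
        rw [hGT]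
        by_cases hk : k = i
        · rw [if_pos hk.symm, if_pos hk,
            if_neg (show ¬ k = f i from fun h => hfi (hk ▸ h.symm)), hk]
          ring
        · rw [if_neg (fun h => hk h.symm), if_neg hk]
          by_cases hk' : k = f i
          · rw [if_pos ⟨hi, hk'⟩, if_pos hk', hk']; ring
          · rw [if_neg (fun h => hk' h.2), if_neg hk']; ring
      rw [Finset.sum_congr rfl (fun k _ => hsplit k), Finset.sum_add_distrib,
        Finset.sum_ite_eq' Finset.univ, Finset.sum_ite_eq' Finset.univ]
      simp only [Finset.mem_univ, if_true]
      rw [hBapp, hBapp, Matrix.one_apply]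
      by_cases hij : i = j
      · subst hij
        rw [if_pos (ancSelf i), if_neg (notAncParent i hi)]
        simp
      · have hiff : anc i j ↔ anc (f i) j := by
          rw [ancStep i j]
          constructor
          · rintro (rfl | h)
            · exact absurd rfl hij
            · exact h
          · exact Or.inr
        by_cases hj : anc (f i) j
        · rw [if_pos (hiff.mpr hj), if_pos hj, if_neg hij]; ring
        · rw [if_neg (fun h => hj (hiff.mp h)), if_neg hj, if_neg hij]; ring
  have hBinv : GT⁻¹ = B := Matrix.inv_eq_right_inv hGTB
  have hMBB : M = B * Bᵀ := by
    rw [hM, Matrix.mul_inv_rev, ← Matrix.transpose_nonsing_inv, hBinv]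
  -- first claim
  have main : ∀ i j : Fin n, M i j =
      ((Finset.univ.filter fun k : Fin n => anc i k ∧ anc j k).card : ℝ) := by
    intro i j
    rw [hMBB]
    rw [Matrix.mul_apply]
    have : ∀ k : Fin n, B i k * Bᵀ k j = if anc i k ∧ anc j k then (1:ℝ) else 0 := by
      intro k
      rw [Matrix.transpose_apply, hBapp, hBapp]
      by_cases h1 : anc i k <;> by_cases h2 : anc j k <;> simp [h1, h2]
    rw [Finset.sum_congr rfl (fun k _ => this k), Finset.sum_boole]
  have filter_eq : ∀ i j : Fin n,
      (Finset.univ.filter fun k : Fin n =>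
        (k = i ∨ (k ≠ i ∧ ∃ a : ℕ, 1 ≤ a ∧ k = f^[a] i)) ∧
        (k = j ∨ (k ≠ j ∧ ∃ a : ℕ, 1 ≤ a ∧ k = f^[a] j))) =
      (Finset.univ.filter fun k : Fin n => anc i k ∧ anc j k) := by
    intro i j
    apply Finset.filter_congr
    intro k _
    simp only [hanc]
    constructor
    · rintro ⟨h1, h2⟩
      exact ⟨h1.imp id And.right, h2.imp id And.right⟩
    · rintro ⟨h1, h2⟩
      constructor
      · rcases h1 with h | h
        · exact Or.inl h
        · by_cases hk : k = i
          · exact Or.inl hk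
          · exact Or.inr ⟨hk, h⟩
      · rcases h2 with h | h
        · exact Or.inl h
        · by_cases hk : k = j
          · exact Or.inl hk
          · exact Or.inr ⟨hk, h⟩
  -- depth computation, by strong induction via a natural number bound
  have card_anc : ∀ i : Fin n,
      (Finset.univ.filter fun k : Fin n => anc i k).card = depth i := by
    have base : (Finset.univ.filter fun k : Fin n => anc (0 : Fin n) k).card = depth 0 := by
      have h0 : (Finset.univ.filter fun k : Fin n => anc 0 k) = {0} := by
        ext k; simp [anc0]
      rw [h0, Finset.card_singleton, hdepth0]
    have H : ∀ m : ℕ, ∀ i : Fin n, i.val ≤ m →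
        (Finset.univ.filter fun k : Fin n => anc i k).card = depth i := by
      intro m
      induction m with
      | zero =>
        intro i him
        have hi : i = 0 := by
          apply Fin.ext
          simpa using Nat.le_zero.mp him
        rw [hi]; exact base
      | succ m ih =>
        intro i him
        by_cases hi : i = 0
        · rw [hi]; exact base
        · have hset : (Finset.univ.filter fun k : Fin n => anc i k) =
              insert i (Finset.univ.filter fun k : Fin n => anc (f i) k) := by
            ext k
            simp only [Finset.mem_filter, Finset.mem_insert, Finset.mem_univ, true_and]
            rw [ancStep i k]
          have hfm : (f i).val ≤ m := by
            have := hf i hi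
            omega
          rw [hset, Finset.card_insert_of_notMem (by
            simp only [Finset.mem_filter, Finset.mem_univ, true_and]
            exact notAncParent i hi), ih (f i) hfm, hdepth i hi]
    exact fun i => H i.val i le_rfl
  constructor
  · intro i j
    rw [main i j, filter_eq i j]
  · intro i
    rw [main i i]
    have hdup : (Finset.univ.filter fun k : Fin n => anc i k ∧ anc i k) =
        (Finset.univ.filter fun k : Fin n => anc i k) := by
      simp
    rw [hdup, card_anc i]
end

section
/- Fix a node i and suppose that w j ≠ w i for every node j of which i is a strict ancestor. Then there exists a vector v : Fin n → ℝ with v i = 1, v j = 0 for every j such that j ≠ i and i is not a strict ancestor of j, and G · v = (w i) • v; that is, v is a right eigenvector of the Generation Matrix G(w,u) for the eigenvalue w i, supported on the subtree rooted at i. -/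
open Matrix Finset

open Classical in
noncomputable def vFun (n : ℕ) [NeZero n] (f : Fin n → Fin n) (hf : ∀ i : Fin n, i ≠ 0 → f i < i)
    (w u : Fin n → ℝ) (i : Fin n) : Fin n → ℝ
  | j =>
    if j = i then 1
    else if h : j ≠ 0 ∧ i ≠ j ∧ ∃ k : ℕ, 1 ≤ k ∧ i = f^[k] j then
      u j * vFun n f hf w u i (f j) / (w j - w i)
    else 0
  termination_by j => (j : ℕ)
  decreasing_by exact hf _ h.1

/-- If `w j ≠ w i` for every strict descendant `j` of `i`, then the Generation Matrix has a
right eigenvector for the eigenvalue `w i`, equal to `1` at `i` and supported on the subtree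
rooted at `i`. -/
theorem generationMatrix_right_eigenvector (n : ℕ) [NeZero n]
    (f : Fin n → Fin n) (hf0 : f 0 = 0) (hf : ∀ i : Fin n, i ≠ 0 → f i < i)
    (w u : Fin n → ℝ) (hw : ∀ i, w i ≠ 0) (hu : ∀ i : Fin n, i ≠ 0 → u i ≠ 0)
    (G : Matrix (Fin n) (Fin n) ℝ)
    (hG : ∀ i j, G i j =
      if i = j then w i else if i ≠ 0 ∧ j = f i then -u i else 0)
    (i : Fin n)
    (hwi : ∀ j : Fin n, (i ≠ j ∧ ∃ k : ℕ, 1 ≤ k ∧ i = f^[k] j) → w j ≠ w i) :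
    ∃ v : Fin n → ℝ, v i = 1 ∧
      (∀ j : Fin n, j ≠ i → ¬(i ≠ j ∧ ∃ k : ℕ, 1 ≤ k ∧ i = f^[k] j) → v j = 0) ∧
      G.mulVec v = w i • v := by
  classical
  set v : Fin n → ℝ := vFun n f hf w u i with hv
  -- basic facts
  have hfle : ∀ m : Fin n, (f m : ℕ) ≤ (m : ℕ) := by
    intro m
    by_cases hm : m = 0
    · subst hm; rw [hf0]
    · exact le_of_lt (hf m hm)
  have hiterle : ∀ (k : ℕ) (m : Fin n), (f^[k] m : ℕ) ≤ (m : ℕ) := by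
    intro k
    induction k with
    | zero => simp
    | succ k ih =>
      intro m
      rw [Function.iterate_succ_apply]
      exact (ih (f m)).trans (hfle m)
  -- a strict descendant j satisfies j ≠ 0 and i < j
  have hdesc : ∀ j : Fin n, (i ≠ j ∧ ∃ k : ℕ, 1 ≤ k ∧ i = f^[k] j) →
      j ≠ 0 ∧ (i : ℕ) < (j : ℕ) := by
    rintro j ⟨hij, k, hk1, hk⟩
    have hj0 : j ≠ 0 := by
      rintro rfl
      have : f^[k] (0 : Fin n) = 0 := by
        apply Function.iterate_fixed hf0
      exact hij (hk.trans this)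
    constructor
    · exact hj0
    · obtain ⟨k', rfl⟩ := Nat.exists_eq_succ_of_ne_zero (Nat.one_le_iff_ne_zero.mp hk1)
      have : (f^[k' + 1] j : ℕ) ≤ (f j : ℕ) := by
        rw [Function.iterate_succ_apply]
        exact hiterle k' (f j)
      calc (i : ℕ) ≤ (f j : ℕ) := by rw [hk]; exact this
        _ < (j : ℕ) := hf j hj0
  -- the three defining equations of v
  have hvi : v i = 1 := by rw [hv, vFun]; simp
  have hvz : ∀ j : Fin n, j ≠ i → ¬(i ≠ j ∧ ∃ k : ℕ, 1 ≤ k ∧ i = f^[k] j) → v j = 0 := by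
    intro j hji hnd
    rw [hv, vFun]
    rw [if_neg hji, dif_neg (fun h => hnd ⟨h.2.1, h.2.2⟩)]
  have hvd : ∀ j : Fin n, (i ≠ j ∧ ∃ k : ℕ, 1 ≤ k ∧ i = f^[k] j) →
      v j = u j * v (f j) / (w j - w i) := by
    intro j hd
    rw [hv, vFun]
    rw [if_neg (Ne.symm hd.1), dif_pos ⟨(hdesc j hd).1, hd⟩]
  refine ⟨v, hvi, hvz, ?_⟩
  -- compute mulVec
  have key : ∀ j, G.mulVec v j = w j * v j + (if j = 0 then 0 else -u j * v (f j)) := by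
    intro j
    have hffj : ∀ m : Fin n, m ≠ 0 → f m ≠ m := fun m hm => ne_of_lt (hf m hm)
    have expand : ∀ x, G j x * v x =
        (if x = j then w j * v j else 0) +
        (if x = f j then (if j = 0 then 0 else -u j * v (f j)) else 0) := by
      intro x
      rw [hG]
      by_cases h1 : j = x
      · subst h1
        by_cases hj0 : j = 0
        · subst hj0
          simp [hf0]
        · simp [hj0, Ne.symm (hffj j hj0)]
      · by_cases h2 : x = f j
        · subst h2
          by_cases hj0 : j = 0
          · subst hj0; simp [hf0] at h1
          · simp [h1, hj0, Ne.symm h1]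
        · simp [h1, h2, Ne.symm h1]
    unfold Matrix.mulVec dotProduct
    rw [Finset.sum_congr rfl (fun x _ => expand x), Finset.sum_add_distrib]
    simp
  funext j
  rw [key j]
  simp only [Pi.smul_apply, smul_eq_mul]
  by_cases hji : j = i
  · subst hji
    by_cases hj0 : j = 0
    · simp [hj0, hvi]
    · rw [if_neg hj0, hvi]
      have hvfj : v (f j) = 0 := by
        apply hvz
        · exact ne_of_lt (hf j hj0)
        · rintro ⟨hij, k, hk1, hk⟩
          have h1 : (j : ℕ) ≤ (f j : ℕ) := by
            conv_lhs => rw [hk]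
            exact hiterle k (f j)
          exact absurd (lt_of_le_of_lt h1 (hf j hj0)) (lt_irrefl _)
      rw [hvfj]; ring
  · by_cases hd : i ≠ j ∧ ∃ k : ℕ, 1 ≤ k ∧ i = f^[k] j
    · -- descendant case
      obtain ⟨hj0, _⟩ := hdesc j hd
      rw [if_neg hj0, hvd j hd]
      have hne : w j - w i ≠ 0 := sub_ne_zero_of_ne (hwi j hd)
      field_simp
      ring
    · -- outside the subtree
      have hvj : v j = 0 := hvz j hji hd
      rw [hvj]
      by_cases hj0 : j = 0
      · simp [hj0]
      · rw [if_neg hj0]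
        have hvfj : v (f j) = 0 := by
          apply hvz
          · intro hfi
            apply hd
            refine ⟨Ne.symm hji, 1, le_refl 1, ?_⟩
            simp [hfi]
          · rintro ⟨hifj, k, hk1, hk⟩
            apply hd
            refine ⟨Ne.symm hji, k + 1, by omega, ?_⟩
            rw [Function.iterate_succ_apply, hk]
        rw [hvfj]; ring
end

section
/- Diagonal decomposition: suppose all node weights satisfy w i > 0 and all edge weights satisfy u i > 0 for i ≠ 0, and extend u by setting u 0 = 1. Define α : Fin n → ℝ by α = exp(G_T⁻¹ · (ln w − ln u)) (logarithm and exponential taken entrywise, G_T⁻¹ applied as matrix–vector product) and β : Fin n → ℝ by β i = w i / α i. Then G(w,u) = diag(β) · G_T · diag(α), where diag(·) denotes the diagonal matrix with the given vector on the diagonal. -/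
open Matrix Finset

/-- Diagonal decomposition of a Generation Matrix with positive weights:
`G(w,u) = diag β ⬝ G_T ⬝ diag α` where `α = exp (G_T⁻¹ (ln w - ln u))` (entrywise) and
`β i = w i / α i`, with the edge weights extended by `u 0 = 1`. -/
theorem generationMatrix_diagonal_decomposition (n : ℕ) [NeZero n]
    (f : Fin n → Fin n) (hf0 : f 0 = 0) (hf : ∀ i : Fin n, i ≠ 0 → f i < i)
    (w u : Fin n → ℝ) (hw : ∀ i, 0 < w i) (hu : ∀ i : Fin n, i ≠ 0 → 0 < u i)
    (hu0 : u 0 = 1)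
    (G : Matrix (Fin n) (Fin n) ℝ)
    (hG : ∀ i j, G i j =
      if i = j then w i else if i ≠ 0 ∧ j = f i then -u i else 0)
    (GT : Matrix (Fin n) (Fin n) ℝ)
    (hGT : ∀ i j, GT i j =
      if i = j then 1 else if i ≠ 0 ∧ j = f i then -1 else 0)
    (α β : Fin n → ℝ)
    (hα : α = fun i => Real.exp
      (GT⁻¹.mulVec (fun k => Real.log (w k) - Real.log (u k)) i))
    (hβ : ∀ i, β i = w i / α i) :
    G = Matrix.diagonal β * GT * Matrix.diagonal α := by
  -- GT is lower triangular with determinant 1, hence invertible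
  have hdet : GT.det = 1 := by
    rw [Matrix.det_of_lowerTriangular GT ?ht]
    · simp only [hGT, if_pos rfl]
      simp
    · intro i j hij
      rw [hGT]
      have hij' : i < j := hij
      have h1 : i ≠ j := ne_of_lt hij'
      have h2 : j ≠ f i := by
        intro h
        rcases eq_or_ne i 0 with h0 | h0
        · subst h; rw [h0, hf0] at hij'; exact absurd (h0 ▸ hij') (lt_irrefl _)
        · exact absurd (h ▸ hij') (not_lt.2 (le_of_lt (hf i h0)))
      simp only [if_neg h1]
      rw [if_neg (fun h : i ≠ 0 ∧ j = f i => h2 h.2)]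
  have hunit : IsUnit GT.det := by rw [hdet]; exact isUnit_one
  set L : Fin n → ℝ := fun k => Real.log (w k) - Real.log (u k) with hL
  set v : Fin n → ℝ := GT⁻¹.mulVec L with hv
  have hGTv : GT.mulVec v = L := by
    rw [hv, Matrix.mulVec_mulVec, Matrix.mul_nonsing_inv GT hunit, Matrix.one_mulVec]
  -- entrywise formula for GT.mulVec
  have hmv : ∀ i : Fin n, i ≠ 0 → v i - v (f i) = L i := by
    intro i hi
    have hfi : f i ≠ i := ne_of_lt (hf i hi)
    have := congrFun hGTv i
    rw [Matrix.mulVec, dotProduct] at this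
    have hsum : ∑ j, GT i j * v j = v i - v (f i) := by
      have : ∀ j, GT i j * v j =
          (if j = i then v j else 0) + (if j = f i then -v j else 0) := by
        intro j
        rcases eq_or_ne j i with rfl | h1
        · rw [hGT]; simp [Ne.symm hfi]
        · rcases eq_or_ne j (f i) with rfl | h2
          · rw [hGT]; simp [h1, Ne.symm h1, hi]
          · rw [hGT]; simp [Ne.symm h1, h1, h2, fun h : i ≠ 0 ∧ j = f i => h2 h.2]
      rw [Finset.sum_congr rfl (fun j _ => this j), Finset.sum_add_distrib,
        Finset.sum_ite_eq' Finset.univ i v, Finset.sum_ite_eq' Finset.univ (f i) (fun j => -v j)]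
      simp [sub_eq_add_neg]
    rw [hsum] at this
    exact this
  have hαpos : ∀ i, 0 < α i := by intro i; rw [hα]; exact Real.exp_pos _
  have hαv : ∀ i, α i = Real.exp (v i) := fun i => by rw [hα]
  -- entries
  ext i j
  have hrhs : (Matrix.diagonal β * GT * Matrix.diagonal α) i j = β i * GT i j * α j := by
    rw [Matrix.mul_diagonal, Matrix.diagonal_mul]
  rw [hrhs, hG, hGT]
  rcases eq_or_ne i j with rfl | hij
  · rw [if_pos rfl, if_pos rfl, hβ i, mul_one, div_mul_cancel₀ _ (ne_of_gt (hαpos i))]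
  · rw [if_neg hij, if_neg hij]
    rcases eq_or_ne i 0 with rfl | hi0
    · simp
    · rcases eq_or_ne j (f i) with rfl | hjf
      · rw [if_pos ⟨hi0, rfl⟩, if_pos ⟨hi0, rfl⟩]
        have key : α i * u i = w i * α (f i) := by
          have h1 : v i - v (f i) = Real.log (w i) - Real.log (u i) := hmv i hi0
          rw [hαv i, hαv (f i)]
          have : Real.exp (v i) = Real.exp (v (f i)) * (w i / u i) := by
            rw [← Real.exp_log (div_pos (hw i) (hu i hi0)), ← Real.exp_add,
              Real.log_div (ne_of_gt (hw i)) (ne_of_gt (hu i hi0)), ← h1]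
            ring_nf
          rw [this, mul_assoc, div_mul_cancel₀ _ (ne_of_gt (hu i hi0)), mul_comm]
        rw [hβ i, div_mul_eq_mul_div, div_mul_eq_mul_div, eq_div_iff (ne_of_gt (hαpos i))]
        linear_combination -key
      · rw [if_neg (fun h : i ≠ 0 ∧ j = f i => hjf h.2),
          if_neg (fun h : i ≠ 0 ∧ j = f i => hjf h.2)]
        ring
end

section
/- Let D be the real n×n matrix with D i j equal to the graph distance between i and j in Γ. Then D = G_T⁻¹ · J + J · (G_Tᵀ)⁻¹ − 2 · (G_Tᵀ · G_T)⁻¹, where J is the n×n all-ones matrix. -/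
open Matrix Finset

section Aux

variable {n : ℕ} [NeZero n] {f : Fin n → Fin n}

/-- The subtree of `j`: nodes having `j` as a weak ancestor. -/
def TreeSub (f : Fin n → Fin n) (j : Fin n) : Set (Fin n) := {i | ∃ k, f^[k] i = j}

lemma tree_f_le (hf0 : f 0 = 0) (hf : ∀ i : Fin n, i ≠ 0 → f i < i) (i : Fin n) : f i ≤ i := by
  by_cases h : i = 0
  · subst h; rw [hf0]
  · exact (hf i h).le

lemma tree_iter_le (hf0 : f 0 = 0) (hf : ∀ i : Fin n, i ≠ 0 → f i < i) (k : ℕ) (i : Fin n) :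
    f^[k] i ≤ i := by
  induction k generalizing i with
  | zero => simp
  | succ m ih =>
    rw [Function.iterate_succ_apply]
    exact (ih (f i)).trans (tree_f_le hf0 hf i)

lemma treeSub_le (hf0 : f 0 = 0) (hf : ∀ i : Fin n, i ≠ 0 → f i < i) {i j : Fin n}
    (h : i ∈ TreeSub f j) : j ≤ i := by
  obtain ⟨k, hk⟩ := h
  exact hk ▸ tree_iter_le hf0 hf k i

lemma treeSub_self (j : Fin n) : j ∈ TreeSub f j := ⟨0, rfl⟩

lemma treeSub_step {i j : Fin n} (h : f i ∈ TreeSub f j) : i ∈ TreeSub f j := by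
  obtain ⟨k, hk⟩ := h
  exact ⟨k + 1, by rwa [Function.iterate_succ_apply]⟩

lemma treeSub_parent_not_mem (hf0 : f 0 = 0) (hf : ∀ i : Fin n, i ≠ 0 → f i < i) {j : Fin n}
    (hj : j ≠ 0) : f j ∉ TreeSub f j := fun h =>
  absurd (treeSub_le hf0 hf h) (not_le.2 (hf j hj))

lemma treeSub_zero_mem (hf0 : f 0 = 0) {j : Fin n} (h : (0 : Fin n) ∈ TreeSub f j) : j = 0 := by
  obtain ⟨k, hk⟩ := h
  rw [Function.iterate_fixed hf0 k] at hk
  exact hk.symm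

lemma treeSub_of_ne {i j : Fin n} (h : i ∈ TreeSub f j) (hij : i ≠ j) : f i ∈ TreeSub f j := by
  obtain ⟨k, hk⟩ := h
  cases k with
  | zero => exact absurd hk hij
  | succ m => exact ⟨m, by rwa [Function.iterate_succ_apply] at hk⟩

variable {Γ : SimpleGraph (Fin n)}

lemma tree_adj_parent (hf : ∀ i : Fin n, i ≠ 0 → f i < i)
    (hΓ : ∀ i j : Fin n, Γ.Adj i j ↔ i ≠ j ∧ ((i ≠ 0 ∧ f i = j) ∨ (j ≠ 0 ∧ f j = i)))
    {i : Fin n} (hi : i ≠ 0) : Γ.Adj (f i) i := by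
  rw [hΓ]
  exact ⟨(hf i hi).ne, Or.inr ⟨hi, rfl⟩⟩

lemma tree_reach_zero (hf0 : f 0 = 0) (hf : ∀ i : Fin n, i ≠ 0 → f i < i)
    (hΓ : ∀ i j : Fin n, Γ.Adj i j ↔ i ≠ j ∧ ((i ≠ 0 ∧ f i = j) ∨ (j ≠ 0 ∧ f j = i)))
    (i : Fin n) : Γ.Reachable 0 i := by
  have H : ∀ m : ℕ, ∀ i : Fin n, (i : ℕ) = m → Γ.Reachable 0 i := by
    intro m
    induction m using Nat.strong_induction_on with
    | _ m ih =>
      intro i him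
      by_cases hi : i = 0
      · subst hi; rfl
      · have hlt : ((f i : ℕ)) < m := him ▸ (hf i hi)
        exact (ih _ hlt (f i) rfl).trans (tree_adj_parent hf hΓ hi).reachable
  exact H i i rfl

lemma tree_reach (hf0 : f 0 = 0) (hf : ∀ i : Fin n, i ≠ 0 → f i < i)
    (hΓ : ∀ i j : Fin n, Γ.Adj i j ↔ i ≠ j ∧ ((i ≠ 0 ∧ f i = j) ∨ (j ≠ 0 ∧ f j = i)))
    (i j : Fin n) : Γ.Reachable i j :=
  (tree_reach_zero hf0 hf hΓ i).symm.trans (tree_reach_zero hf0 hf hΓ j)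

/-- Edge analysis: an edge from outside the subtree of `j` to inside it must be `(f j, j)`. -/
lemma tree_edge_cross (hΓ : ∀ i j : Fin n, Γ.Adj i j ↔ i ≠ j ∧ ((i ≠ 0 ∧ f i = j) ∨ (j ≠ 0 ∧ f j = i)))
    {a b j : Fin n} (h : Γ.Adj a b) (ha : a ∉ TreeSub f j) (hb : b ∈ TreeSub f j) :
    a = f j ∧ b = j := by
  rw [hΓ] at h
  obtain ⟨hne, hcase⟩ := h
  rcases hcase with ⟨_, hfa⟩ | ⟨_, hfb⟩
  · exact absurd (treeSub_step (hfa ▸ hb)) ha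
  · by_cases hbj : b = j
    · exact ⟨by rw [← hbj, hfb], hbj⟩
    · exact absurd (hfb ▸ treeSub_of_ne hb hbj) ha

lemma tree_walk_lb_out (hf0 : f 0 = 0) (hf : ∀ i : Fin n, i ≠ 0 → f i < i)
    (hΓ : ∀ i j : Fin n, Γ.Adj i j ↔ i ≠ j ∧ ((i ≠ 0 ∧ f i = j) ∨ (j ≠ 0 ∧ f j = i)))
    {j : Fin n} {i : Fin n} (w : Γ.Walk i j) (hi : i ∉ TreeSub f j) :
    Γ.dist i (f j) + 1 ≤ w.length := by
  have H : ∀ {a b : Fin n} (w : Γ.Walk a b), a ∉ TreeSub f b →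
      Γ.dist a (f b) + 1 ≤ w.length := by
    intro a b w
    induction w with
    | nil => exact fun ha => absurd (treeSub_self _) ha
    | @cons a x b hax w' ih =>
      intro ha
      by_cases hx : x ∈ TreeSub f b
      · obtain ⟨haf, _⟩ := tree_edge_cross hΓ hax ha hx
        subst haf
        simp [SimpleGraph.dist_self]
      · obtain ⟨p, hp⟩ := (tree_reach hf0 hf hΓ x (f b)).exists_walk_length_eq_dist
        have h1 : Γ.dist a (f b) ≤ Γ.dist x (f b) + 1 := by
          have := SimpleGraph.dist_le (SimpleGraph.Walk.cons hax p)
          simpa [hp] using this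
        have h2 := ih hx
        simp only [SimpleGraph.Walk.length_cons]
        omega
  exact H w hi

lemma tree_walk_lb_in (hf0 : f 0 = 0) (hf : ∀ i : Fin n, i ≠ 0 → f i < i)
    (hΓ : ∀ i j : Fin n, Γ.Adj i j ↔ i ≠ j ∧ ((i ≠ 0 ∧ f i = j) ∨ (j ≠ 0 ∧ f j = i)))
    {j : Fin n} (hj : j ≠ 0) {i : Fin n} (w : Γ.Walk i (f j)) (hi : i ∈ TreeSub f j) :
    Γ.dist i j + 1 ≤ w.length := by
  have H : ∀ {a r : Fin n} (w : Γ.Walk a r), r = f j → a ∈ TreeSub f j →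
      Γ.dist a j + 1 ≤ w.length := by
    intro a r w
    induction w with
    | nil =>
      intro hr ha
      subst hr
      exact absurd ha (treeSub_parent_not_mem hf0 hf hj)
    | @cons a x b hax w' ih =>
      intro hr ha
      subst hr
      by_cases hx : x ∈ TreeSub f j
      · obtain ⟨p, hp⟩ := (tree_reach hf0 hf hΓ x j).exists_walk_length_eq_dist
        have h1 : Γ.dist a j ≤ Γ.dist x j + 1 := by
          have := SimpleGraph.dist_le (SimpleGraph.Walk.cons hax p)
          simpa [hp] using this
        have h2 := ih rfl hx
        simp only [SimpleGraph.Walk.length_cons]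
        omega
      · obtain ⟨hxf, haj⟩ := tree_edge_cross hΓ hax.symm hx ha
        subst haj
        simp [SimpleGraph.dist_self]
  exact H w rfl hi

/-- For `i` outside the subtree of `j`, `dist i j = dist i (f j) + 1`. -/
lemma tree_dist_out (hf0 : f 0 = 0) (hf : ∀ i : Fin n, i ≠ 0 → f i < i)
    (hΓ : ∀ i j : Fin n, Γ.Adj i j ↔ i ≠ j ∧ ((i ≠ 0 ∧ f i = j) ∨ (j ≠ 0 ∧ f j = i)))
    {j : Fin n} (hj : j ≠ 0) {i : Fin n} (hi : i ∉ TreeSub f j) :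
    Γ.dist i j = Γ.dist i (f j) + 1 := by
  refine le_antisymm ?_ ?_
  · obtain ⟨p, hp⟩ := (tree_reach hf0 hf hΓ i (f j)).exists_walk_length_eq_dist
    have := SimpleGraph.dist_le (p.concat (tree_adj_parent hf hΓ hj))
    simpa [SimpleGraph.Walk.length_concat, hp] using this
  · obtain ⟨w, hw⟩ := (tree_reach hf0 hf hΓ i j).exists_walk_length_eq_dist
    exact hw ▸ tree_walk_lb_out hf0 hf hΓ w hi

/-- For `i` inside the subtree of `j`, `dist i (f j) = dist i j + 1`. -/
lemma tree_dist_in (hf0 : f 0 = 0) (hf : ∀ i : Fin n, i ≠ 0 → f i < i)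
    (hΓ : ∀ i j : Fin n, Γ.Adj i j ↔ i ≠ j ∧ ((i ≠ 0 ∧ f i = j) ∨ (j ≠ 0 ∧ f j = i)))
    {j : Fin n} (hj : j ≠ 0) {i : Fin n} (hi : i ∈ TreeSub f j) :
    Γ.dist i (f j) = Γ.dist i j + 1 := by
  refine le_antisymm ?_ ?_
  · obtain ⟨p, hp⟩ := (tree_reach hf0 hf hΓ i j).exists_walk_length_eq_dist
    have := SimpleGraph.dist_le (p.concat (tree_adj_parent hf hΓ hj).symm)
    simpa [SimpleGraph.Walk.length_concat, hp] using this
  · obtain ⟨w, hw⟩ := (tree_reach hf0 hf hΓ i (f j)).exists_walk_length_eq_dist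
    exact hw ▸ tree_walk_lb_in hf0 hf hΓ hj w hi

end Aux

/-- The distance matrix of the tree `Γ` satisfies
`D = G_T⁻¹ ⬝ J + J ⬝ (G_Tᵀ)⁻¹ - 2 (G_Tᵀ ⬝ G_T)⁻¹`, where `J` is the all-ones matrix. -/
theorem structureMatrix_distance_matrix (n : ℕ) [NeZero n]
    (f : Fin n → Fin n) (hf0 : f 0 = 0) (hf : ∀ i : Fin n, i ≠ 0 → f i < i)
    (GT : Matrix (Fin n) (Fin n) ℝ)
    (hGT : ∀ i j, GT i j =
      if i = j then 1 else if i ≠ 0 ∧ j = f i then -1 else 0)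
    (Γ : SimpleGraph (Fin n))
    (hΓ : ∀ i j : Fin n, Γ.Adj i j ↔
      i ≠ j ∧ ((i ≠ 0 ∧ f i = j) ∨ (j ≠ 0 ∧ f j = i)))
    (D : Matrix (Fin n) (Fin n) ℝ)
    (hD : ∀ i j : Fin n, D i j = (Γ.dist i j : ℝ)) :
    D = GT⁻¹ * Matrix.of (fun _ _ : Fin n => (1 : ℝ)) +
        Matrix.of (fun _ _ : Fin n => (1 : ℝ)) * (GTᵀ)⁻¹ -
        2 • (GTᵀ * GT)⁻¹ := by
  set J : Matrix (Fin n) (Fin n) ℝ := Matrix.of (fun _ _ : Fin n => (1 : ℝ)) with hJ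
  -- row structure of GT
  have hrow : ∀ (X : Matrix (Fin n) (Fin n) ℝ) (i j : Fin n),
      (GT * X) i j = X i j - if i = 0 then 0 else X (f i) j := by
    intro X i j
    rw [Matrix.mul_apply]
    by_cases hi : i = 0
    · subst hi
      have h1 : ∀ k : Fin n, GT 0 k * X k j = if k = 0 then X 0 j else 0 := by
        intro k
        rw [hGT]
        by_cases hk : (0 : Fin n) = k
        · simp [← hk]
        · simp [hk, Ne.symm hk]
      rw [Finset.sum_congr rfl (fun k _ => h1 k)]
      simp [Finset.sum_ite_eq']
    · have hfi : f i ≠ i := (hf i hi).ne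
      have h1 : ∀ k : Fin n, GT i k * X k j =
          (if k = i then X i j else 0) - (if k = f i then X (f i) j else 0) := by
        intro k
        rw [hGT]
        by_cases hk1 : i = k
        · simp [← hk1, hfi, Ne.symm hfi]
        · by_cases hk2 : k = f i
          · simp [hk1, hk2, hi, Ne.symm hk1, hfi, Ne.symm hfi]
          · simp [hk1, hk2, hi, Ne.symm hk1]
      rw [Finset.sum_congr rfl (fun k _ => h1 k), Finset.sum_sub_distrib]
      simp [Finset.sum_ite_eq', hi]
  have hcol : ∀ (X : Matrix (Fin n) (Fin n) ℝ) (i j : Fin n),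
      (X * GTᵀ) i j = X i j - if j = 0 then 0 else X i (f j) := by
    intro X i j
    rw [Matrix.mul_apply]
    by_cases hj : j = 0
    · subst hj
      have h1 : ∀ k : Fin n, X i k * GTᵀ k 0 = if k = 0 then X i 0 else 0 := by
        intro k
        rw [Matrix.transpose_apply, hGT]
        by_cases hk : (0 : Fin n) = k
        · simp [← hk]
        · simp [hk, Ne.symm hk]
      rw [Finset.sum_congr rfl (fun k _ => h1 k)]
      simp [Finset.sum_ite_eq']
    · have hfj : f j ≠ j := (hf j hj).ne
      have h1 : ∀ k : Fin n, X i k * GTᵀ k j =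
          (if k = j then X i j else 0) - (if k = f j then X i (f j) else 0) := by
        intro k
        rw [Matrix.transpose_apply, hGT]
        by_cases hk1 : j = k
        · simp [← hk1, hfj, Ne.symm hfj]
        · by_cases hk2 : k = f j
          · simp [hk1, hk2, hj, Ne.symm hk1, hfj, Ne.symm hfj]
          · simp [hk1, hk2, hj, Ne.symm hk1]
      rw [Finset.sum_congr rfl (fun k _ => h1 k), Finset.sum_sub_distrib]
      simp [Finset.sum_ite_eq', hj]
  -- key entrywise identity
  have key : GT * D * GTᵀ = J * GTᵀ + GT * J - 2 • (1 : Matrix (Fin n) (Fin n) ℝ) := by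
    ext i j
    rw [Matrix.sub_apply, Matrix.add_apply, hcol (GT * D) i j, hrow D i j, hrow D i (f j),
      hcol J i j, hrow J i j, Matrix.smul_apply, Matrix.one_apply]
    have hJ11 : ∀ a b : Fin n, J a b = 1 := fun a b => rfl
    by_cases hi : i = 0 <;> by_cases hj : j = 0
    · -- i = 0, j = 0
      subst hi; subst hj
      simp [hJ11, hD, SimpleGraph.dist_self]
      norm_num
    · -- i = 0, j ≠ 0
      subst hi
      have h0 : (0 : Fin n) ∉ TreeSub f j := fun h => hj (treeSub_zero_mem hf0 h)
      have hd := tree_dist_out hf0 hf hΓ hj h0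
      have hne : (0 : Fin n) ≠ j := Ne.symm hj
      simp only [if_pos rfl, if_neg hj, if_neg hne, hJ11, hD, hd]
      push_cast
      ring
    · -- i ≠ 0, j = 0
      subst hj
      have h0 : (0 : Fin n) ∉ TreeSub f i := fun h => hi (treeSub_zero_mem hf0 h)
      have hd : Γ.dist 0 i = Γ.dist 0 (f i) + 1 := tree_dist_out hf0 hf hΓ hi h0
      have e1 : D i 0 = (Γ.dist 0 i : ℝ) := by rw [hD, SimpleGraph.dist_comm]
      have e2 : D (f i) 0 = (Γ.dist 0 (f i) : ℝ) := by rw [hD, SimpleGraph.dist_comm]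
      simp only [if_pos rfl, if_neg hi, hJ11, e1, e2, hd]
      push_cast
      ring
    · -- i ≠ 0, j ≠ 0
      by_cases hij : i = j
      · -- diagonal
        subst hij
        have hii : Γ.dist i (f i) = 1 := by
          have := tree_dist_in hf0 hf hΓ hi (treeSub_self i)
          simpa [SimpleGraph.dist_self] using this
        have hfi : Γ.dist (f i) i = 1 := by rw [SimpleGraph.dist_comm]; exact hii
        simp only [if_neg hi, if_pos rfl, hJ11, hD, hii, hfi, SimpleGraph.dist_self]
        push_cast
        norm_num
      · by_cases hmem : i ∈ TreeSub f j
        · have hfm : f i ∈ TreeSub f j := treeSub_of_ne hmem hij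
          have h1 := tree_dist_in hf0 hf hΓ hj hmem
          have h2 := tree_dist_in hf0 hf hΓ hj hfm
          simp only [if_neg hi, if_neg hj, if_neg hij, hJ11, hD, h1, h2]
          push_cast
          ring
        · have hfm : f i ∉ TreeSub f j := fun h => hmem (treeSub_step h)
          have h1 := tree_dist_out hf0 hf hΓ hj hmem
          have h2 := tree_dist_out hf0 hf hΓ hj hfm
          simp only [if_neg hi, if_neg hj, if_neg hij, hJ11, hD, h1, h2]
          push_cast
          ring
  -- GT is invertible: lower triangular with unit diagonal
  have hdet : IsUnit GT.det := by
    have htri : GT.BlockTriangular OrderDual.toDual := by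
      intro i j hlt
      have hij : i < j := hlt
      rw [hGT, if_neg hij.ne, if_neg]
      rintro ⟨hi0, hfi⟩
      exact absurd (hfi ▸ hij) (not_lt.2 (tree_f_le hf0 hf i))
    rw [Matrix.det_of_lowerTriangular GT htri]
    have : ∀ i : Fin n, GT i i = 1 := fun i => by rw [hGT, if_pos rfl]
    simp [this]
  have hdetT : IsUnit GTᵀ.det := by rwa [Matrix.det_transpose]
  -- assemble
  have hD' : D = GT⁻¹ * (GT * D * GTᵀ) * GTᵀ⁻¹ := by
    rw [Matrix.mul_assoc GT D GTᵀ, Matrix.nonsing_inv_mul_cancel_left _ _ hdet,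
      Matrix.mul_nonsing_inv_cancel_right _ _ hdetT]
  rw [hD', key]
  rw [Matrix.mul_sub, Matrix.sub_mul, Matrix.mul_add, Matrix.add_mul]
  congr 1
  · congr 1
    · rw [← Matrix.mul_assoc, Matrix.mul_assoc (GT⁻¹ * J),
        Matrix.mul_nonsing_inv _ hdetT, Matrix.mul_one]
    · rw [← Matrix.mul_assoc, Matrix.nonsing_inv_mul _ hdet, Matrix.one_mul]
  · rw [Matrix.mul_smul, Matrix.smul_mul, Matrix.mul_one, Matrix.mul_inv_rev]
end

section
/- For all leaves i and j, the (i,j) entry of (G_Tᵀ · G_T)⁻¹ equals the maximum of depth k over all common ancestors-or-self k of i and j (this set is nonempty since the root is a common ancestor-or-self of every pair of nodes); equivalently, this entry minus 1 equals the distance from the root to the deepest common ancestor of the leaves i and j, which is the entry of the Ancestral Matrix of the tree. -/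
open Matrix Finset
open scoped Classical

section Aux
variable {n : ℕ} [NeZero n] {f : Fin n → Fin n}

lemma my_fle (hf0 : f 0 = 0) (hf : ∀ i : Fin n, i ≠ 0 → f i < i) (x : Fin n) : f x ≤ x := by
  by_cases hx : x = 0
  · simp [hx, hf0]
  · exact le_of_lt (hf x hx)

lemma my_iter_le (hf0 : f 0 = 0) (hf : ∀ i : Fin n, i ≠ 0 → f i < i) (a : ℕ) :
    ∀ x : Fin n, f^[a] x ≤ x := by
  induction a with
  | zero => intro x; simp
  | succ a ih =>
      intro x
      rw [Function.iterate_succ_apply]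
      exact le_trans (ih (f x)) (my_fle hf0 hf x)

lemma my_exists_iter_zero (hf0 : f 0 = 0) (hf : ∀ i : Fin n, i ≠ 0 → f i < i) (x : Fin n) :
    ∃ a, f^[a] x = 0 := by
  have H : ∀ m : ℕ, ∀ x : Fin n, x.val < m → ∃ a, f^[a] x = 0 := by
    intro m
    induction m with
    | zero => intro x hx; omega
    | succ m ih =>
        intro x hx
        by_cases hx0 : x = 0
        · exact ⟨0, by simp [hx0]⟩
        · have h1 : (f x).val < x.val := hf x hx0
          obtain ⟨a, ha⟩ := ih (f x) (by omega)
          exact ⟨a + 1, by rw [Function.iterate_succ_apply]; exact ha⟩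
  exact H (x.val + 1) x (Nat.lt_succ_self _)

lemma my_chain {x k k' : Fin n} (h1 : ∃ a, k = f^[a] x) (h2 : ∃ b, k' = f^[b] x) :
    (∃ c, k = f^[c] k') ∨ (∃ c, k' = f^[c] k) := by
  obtain ⟨a, ha⟩ := h1
  obtain ⟨b, hb⟩ := h2
  rcases le_total a b with h | h
  · right
    refine ⟨b - a, ?_⟩
    rw [hb, ha, ← Function.iterate_add_apply]
    congr 1
    omega
  · left
    refine ⟨a - b, ?_⟩
    rw [ha, hb, ← Function.iterate_add_apply]
    congr 1
    omega

noncomputable def myAnc (f : Fin n → Fin n) (x : Fin n) : Finset (Fin n) :=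
  Finset.univ.filter fun k => ∃ a : ℕ, k = f^[a] x

lemma mem_myAnc {x k : Fin n} : k ∈ myAnc f x ↔ ∃ a : ℕ, k = f^[a] x := by
  simp [myAnc]

lemma myAnc_self (x : Fin n) : x ∈ myAnc f x := mem_myAnc.2 ⟨0, rfl⟩

lemma myAnc_le (hf0 : f 0 = 0) (hf : ∀ i : Fin n, i ≠ 0 → f i < i) {x k : Fin n}
    (h : k ∈ myAnc f x) : k ≤ x := by
  obtain ⟨a, ha⟩ := mem_myAnc.1 h
  rw [ha]; exact my_iter_le hf0 hf a x

lemma myAnc_zero (hf0 : f 0 = 0) : myAnc f 0 = {0} := by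
  ext k
  simp only [mem_myAnc, Finset.mem_singleton]
  constructor
  · rintro ⟨a, ha⟩
    rw [ha, Function.iterate_fixed hf0]
  · rintro rfl; exact ⟨0, rfl⟩

lemma myAnc_succ {x : Fin n} (hx : x ≠ 0) :
    myAnc f x = insert x (myAnc f (f x)) := by
  ext k
  simp only [mem_myAnc, Finset.mem_insert]
  constructor
  · rintro ⟨a, ha⟩
    match a with
    | 0 => left; exact ha
    | b + 1 => right; exact ⟨b, by rw [ha, Function.iterate_succ_apply]⟩
  · rintro (rfl | ⟨b, hb⟩)
    · exact ⟨0, rfl⟩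
    · exact ⟨b + 1, by rw [hb, Function.iterate_succ_apply]⟩

lemma notMem_myAnc (hf0 : f 0 = 0) (hf : ∀ i : Fin n, i ≠ 0 → f i < i) {x : Fin n}
    (hx : x ≠ 0) : x ∉ myAnc f (f x) := by
  intro h
  have h1 : x ≤ f x := myAnc_le hf0 hf h
  exact absurd (lt_of_le_of_lt h1 (hf x hx)) (lt_irrefl x)

lemma card_myAnc (hf0 : f 0 = 0) (hf : ∀ i : Fin n, i ≠ 0 → f i < i)
    (depth : Fin n → ℕ) (hdepth0 : depth 0 = 1)
    (hdepth : ∀ i : Fin n, i ≠ 0 → depth i = depth (f i) + 1) (x : Fin n) :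
    (myAnc f x).card = depth x := by
  have H : ∀ m : ℕ, ∀ x : Fin n, x.val < m → (myAnc f x).card = depth x := by
    intro m
    induction m with
    | zero => intro x hx; omega
    | succ m ih =>
        intro x hx
        by_cases hx0 : x = 0
        · subst hx0; rw [myAnc_zero hf0, hdepth0]; simp
        · have h1 : (f x).val < x.val := hf x hx0
          rw [myAnc_succ hx0, Finset.card_insert_of_notMem (notMem_myAnc hf0 hf hx0),
            ih (f x) (by omega), hdepth x hx0]
  exact H (x.val + 1) x (Nat.lt_succ_self _)

lemma depth_iter_le (hf0 : f 0 = 0)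
    (depth : Fin n → ℕ)
    (hdepth : ∀ i : Fin n, i ≠ 0 → depth i = depth (f i) + 1) (a : ℕ) :
    ∀ x : Fin n, depth (f^[a] x) ≤ depth x := by
  induction a with
  | zero => intro x; simp
  | succ a ih =>
      intro x
      rw [Function.iterate_succ_apply]
      refine le_trans (ih (f x)) ?_
      by_cases hx : x = 0
      · simp [hx, hf0]
      · rw [hdepth x hx]; omega

end Aux

section Aux2
variable {n : ℕ} [NeZero n] {f : Fin n → Fin n}

lemma my_right_inv (hf0 : f 0 = 0) (hf : ∀ i : Fin n, i ≠ 0 → f i < i)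
    (GT : Matrix (Fin n) (Fin n) ℝ)
    (hGT : ∀ i j, GT i j = if i = j then 1 else if i ≠ 0 ∧ j = f i then -1 else 0) :
    GT * (Matrix.of fun x k : Fin n => if k ∈ myAnc f x then (1:ℝ) else 0) = 1 := by
  set A : Matrix (Fin n) (Fin n) ℝ :=
    Matrix.of fun x k : Fin n => if k ∈ myAnc f x then (1:ℝ) else 0 with hA
  ext x y
  rw [Matrix.mul_apply]
  by_cases hx : x = 0
  · subst hx
    have h1 : ∀ k : Fin n, GT 0 k * A k y = if (0:Fin n) = k then A k y else 0 := by
      intro k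
      rw [hGT]
      by_cases h : (0:Fin n) = k <;> simp [h]
    rw [Finset.sum_congr rfl fun k _ => h1 k, Finset.sum_ite_eq]
    simp only [Finset.mem_univ, if_true]
    rw [hA, Matrix.one_apply]
    simp only [Matrix.of_apply, myAnc_zero hf0, Finset.mem_singleton]
    by_cases hy : y = 0 <;> simp [hy, eq_comm]
  · have hfx : f x ≠ x := ne_of_lt (hf x hx)
    have h1 : ∀ k : Fin n, GT x k * A k y =
        (if x = k then A k y else 0) + (if k = f x then -A k y else 0) := by
      intro k
      rw [hGT]
      by_cases h : x = k
      · subst h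
        simp [Ne.symm hfx]
      · by_cases h2 : k = f x <;> simp [h, h2, hx, Ne.symm hfx]
    rw [Finset.sum_congr rfl fun k _ => h1 k, Finset.sum_add_distrib,
      Finset.sum_ite_eq, Finset.sum_ite_eq']
    simp only [Finset.mem_univ, if_true]
    rw [hA, Matrix.one_apply]
    simp only [Matrix.of_apply]
    rw [myAnc_succ hx]
    by_cases hxy : x = y
    · subst hxy
      have : x ∉ myAnc f (f x) := notMem_myAnc hf0 hf hx
      simp [this]
    · have : y ∈ insert x (myAnc f (f x)) ↔ y ∈ myAnc f (f x) := by
        simp [Ne.symm hxy]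
      by_cases hy : y ∈ myAnc f (f x) <;> simp [hxy, hy, this]

end Aux2

open scoped Classical in
/-- For leaves `i` and `j`, the `(i,j)` entry of `(G_Tᵀ ⬝ G_T)⁻¹` equals the maximum of
`depth k` over all common ancestors-or-self `k` of `i` and `j` (a nonempty set). -/
theorem structureMatrix_ancestralMatrix (n : ℕ) [NeZero n]
    (f : Fin n → Fin n) (hf0 : f 0 = 0) (hf : ∀ i : Fin n, i ≠ 0 → f i < i)
    (GT : Matrix (Fin n) (Fin n) ℝ)
    (hGT : ∀ i j, GT i j =
      if i = j then 1 else if i ≠ 0 ∧ j = f i then -1 else 0)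
    (depth : Fin n → ℕ) (hdepth0 : depth 0 = 1)
    (hdepth : ∀ i : Fin n, i ≠ 0 → depth i = depth (f i) + 1)
    (i j : Fin n)
    (hi : (Finset.univ.filter fun a : Fin n => a ≠ 0 ∧ f a = i) = ∅)
    (hj : (Finset.univ.filter fun a : Fin n => a ≠ 0 ∧ f a = j) = ∅) :
    (Finset.univ.filter fun k : Fin n =>
      (k = i ∨ (k ≠ i ∧ ∃ a : ℕ, 1 ≤ a ∧ k = f^[a] i)) ∧
      (k = j ∨ (k ≠ j ∧ ∃ a : ℕ, 1 ≤ a ∧ k = f^[a] j))).Nonempty ∧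
    (GTᵀ * GT)⁻¹ i j =
      (((Finset.univ.filter fun k : Fin n =>
        (k = i ∨ (k ≠ i ∧ ∃ a : ℕ, 1 ≤ a ∧ k = f^[a] i)) ∧
        (k = j ∨ (k ≠ j ∧ ∃ a : ℕ, 1 ≤ a ∧ k = f^[a] j))).sup depth : ℕ) : ℝ) := by
  have hiff : ∀ x k : Fin n,
      (k = x ∨ (k ≠ x ∧ ∃ a : ℕ, 1 ≤ a ∧ k = f^[a] x)) ↔ ∃ a : ℕ, k = f^[a] x := by
    intro x k
    constructor
    · rintro (rfl | ⟨_, a, _, ha⟩)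
      · exact ⟨0, rfl⟩
      · exact ⟨a, ha⟩
    · rintro ⟨a, ha⟩
      by_cases hk : k = x
      · exact Or.inl hk
      · refine Or.inr ⟨hk, a, ?_, ha⟩
        rcases a with _ | a
        · simp at ha; exact absurd ha hk
        · omega
  have hS : (Finset.univ.filter fun k : Fin n =>
      (k = i ∨ (k ≠ i ∧ ∃ a : ℕ, 1 ≤ a ∧ k = f^[a] i)) ∧
      (k = j ∨ (k ≠ j ∧ ∃ a : ℕ, 1 ≤ a ∧ k = f^[a] j))) = myAnc f i ∩ myAnc f j := by
    ext k
    simp only [Finset.mem_filter, Finset.mem_univ, true_and, Finset.mem_inter, mem_myAnc,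
      hiff i k, hiff j k]
  have hne : (myAnc f i ∩ myAnc f j).Nonempty := by
    obtain ⟨a, ha⟩ := my_exists_iter_zero hf0 hf i
    obtain ⟨b, hb⟩ := my_exists_iter_zero hf0 hf j
    exact ⟨0, Finset.mem_inter.2 ⟨mem_myAnc.2 ⟨a, ha.symm⟩, mem_myAnc.2 ⟨b, hb.symm⟩⟩⟩
  set c : Fin n := (myAnc f i ∩ myAnc f j).max' hne with hc
  have hc_mem : c ∈ myAnc f i ∩ myAnc f j := Finset.max'_mem _ hne
  have hCA : myAnc f i ∩ myAnc f j = myAnc f c := by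
    ext k
    constructor
    · intro hk
      rcases my_chain (mem_myAnc.1 (Finset.mem_inter.1 hk).1)
          (mem_myAnc.1 (Finset.mem_inter.1 hc_mem).1) with ⟨d, hd⟩ | ⟨d, hd⟩
      · exact mem_myAnc.2 ⟨d, hd⟩
      · have h1 : c ≤ k := myAnc_le hf0 hf (mem_myAnc.2 ⟨d, hd⟩)
        have h2 : k ≤ c := Finset.le_max' _ k hk
        have : k = c := le_antisymm h2 h1
        rw [this]; exact myAnc_self c
    · intro hk
      obtain ⟨a, ha⟩ := mem_myAnc.1 hk
      obtain ⟨b, hb⟩ := mem_myAnc.1 (Finset.mem_inter.1 hc_mem).1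
      obtain ⟨b', hb'⟩ := mem_myAnc.1 (Finset.mem_inter.1 hc_mem).2
      refine Finset.mem_inter.2 ⟨mem_myAnc.2 ⟨a + b, ?_⟩, mem_myAnc.2 ⟨a + b', ?_⟩⟩
      · rw [Function.iterate_add_apply, ← hb, ← ha]
      · rw [Function.iterate_add_apply, ← hb', ← ha]
  have hsup : (myAnc f i ∩ myAnc f j).sup depth = depth c := by
    refine le_antisymm (Finset.sup_le fun k hk => ?_) (Finset.le_sup hc_mem)
    rw [hCA] at hk
    obtain ⟨a, ha⟩ := mem_myAnc.1 hk
    rw [ha]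
    exact depth_iter_le hf0 depth hdepth a c
  have hcard : (myAnc f i ∩ myAnc f j).card = depth c := by
    rw [hCA]
    exact card_myAnc hf0 hf depth hdepth0 hdepth c
  set A : Matrix (Fin n) (Fin n) ℝ :=
    Matrix.of fun x k : Fin n => if k ∈ myAnc f x then (1:ℝ) else 0 with hA
  have hinv : GT⁻¹ = A := Matrix.inv_eq_right_inv (my_right_inv hf0 hf GT hGT)
  have hT : GTᵀ⁻¹ = Aᵀ := by rw [← Matrix.transpose_nonsing_inv, hinv]
  have hmain : (GTᵀ * GT)⁻¹ i j = ((myAnc f i ∩ myAnc f j).card : ℝ) := by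
    rw [Matrix.mul_inv_rev, hinv, hT, Matrix.mul_apply]
    have h1 : ∀ k : Fin n, A i k * Aᵀ k j =
        if k ∈ myAnc f i ∩ myAnc f j then (1:ℝ) else 0 := by
      intro k
      rw [Matrix.transpose_apply, hA]
      simp only [Matrix.of_apply, Finset.mem_inter]
      by_cases h1 : k ∈ myAnc f i <;> by_cases h2 : k ∈ myAnc f j <;> simp [h1, h2]
    rw [Finset.sum_congr rfl fun k _ => h1 k, Finset.sum_ite_mem, Finset.univ_inter,
      Finset.sum_const, nsmul_eq_mul, mul_one]
  refine ⟨?_, ?_⟩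
  · rw [hS]; exact hne
  · rw [hS, hmain, hcard, hsup]
end

section
/- Let h > 0 and ε > 0, and suppose M_Tᵀ · M_T is invertible. On a probability space, let ξ_0, …, ξ_{n−1} be independent square-integrable real random variables, each with mean 0 and variance 2h²/ε² (the variance of a Laplace distribution with scale h/ε). Let P = M_T · (M_Tᵀ · M_T)⁻¹ · M_Tᵀ. Then E[Σ_{i} ξ_i²] = 2n h²/ε², and E[‖(I − P) · ξ‖²] = 2(n − n₁) h²/ε², where ‖·‖ is the Euclidean norm on ℝⁿ and n − n₁ is the number of leaves of the tree. -/
/-!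
Independence and mean zero kill the cross terms, so `E ‖A ξ‖² = tr (A Aᵀ) σ²` for every matrix `A`.
For `A = I - P`, where `P = M (MᵀM)⁻¹ Mᵀ` is the orthogonal projection onto the column space of `M`,
`A` is symmetric and idempotent, hence `tr (A Aᵀ) = tr A = n - tr ((MᵀM)⁻¹ MᵀM) = n - n₁`.
-/

open Matrix Finset MeasureTheory ProbabilityTheory

section Noise

variable {ι Ω : Type*} [Fintype ι] [MeasurableSpace Ω] {μ : Measure Ω} [IsProbabilityMeasure μ]
  {ξ : ι → Ω → ℝ}

theorem integral_sq_sum_mul_of_iIndepFun (hindep : iIndepFun ξ μ) (hL2 : ∀ i, MemLp (ξ i) 2 μ)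
    (hmean : ∀ i, ∫ ω, ξ i ω ∂μ = 0) (a : ι → ℝ) :
    ∫ ω, (∑ i, a i * ξ i ω) ^ 2 ∂μ = ∑ i, a i ^ 2 * ∫ ω, ξ i ω ^ 2 ∂μ := by
  have hL2a : ∀ i, MemLp (fun ω ↦ a i * ξ i ω) 2 μ := fun i ↦ (hL2 i).const_mul (a i)
  have hmean_sum : ∫ ω, ∑ i, a i * ξ i ω ∂μ = 0 := by
    rw [integral_finsetSum _ fun i _ ↦ (hL2a i).integrable one_le_two]
    simp [integral_const_mul, hmean]
  have hpair : Set.Pairwise (univ : Finset ι)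
      fun i j ↦ (fun ω ↦ a i * ξ i ω) ⟂ᵢ[μ] (fun ω ↦ a j * ξ j ω) := fun i _ j _ hij ↦
    (hindep.indepFun hij).comp (measurable_const_mul (a i)) (measurable_const_mul (a j))
  calc ∫ ω, (∑ i, a i * ξ i ω) ^ 2 ∂μ = variance (∑ i, fun ω ↦ a i * ξ i ω) μ := by
        rw [sum_fn, variance_of_integral_eq_zero
          (memLp_finsetSum _ fun i _ ↦ hL2a i).aemeasurable hmean_sum]
    _ = ∑ i, variance (fun ω ↦ a i * ξ i ω) μ := IndepFun.variance_sum (fun i _ ↦ hL2a i) hpair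
    _ = ∑ i, a i ^ 2 * ∫ ω, ξ i ω ^ 2 ∂μ := by
        refine sum_congr rfl fun i _ ↦ ?_
        rw [variance_const_mul, variance_of_integral_eq_zero (hL2 i).aemeasurable (hmean i)]

theorem integral_sum_sq_mulVec_of_iIndepFun {κ : Type*} [Fintype κ] (hindep : iIndepFun ξ μ)
    (hL2 : ∀ i, MemLp (ξ i) 2 μ) (hmean : ∀ i, ∫ ω, ξ i ω ∂μ = 0) {σ2 : ℝ}
    (hvar : ∀ i, ∫ ω, ξ i ω ^ 2 ∂μ = σ2) (A : Matrix κ ι ℝ) :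
    ∫ ω, ∑ j, (A *ᵥ fun i ↦ ξ i ω) j ^ 2 ∂μ = (A * Aᵀ).trace * σ2 := by
  simp only [mulVec, dotProduct]
  rw [integral_finsetSum _ fun j _ ↦
    (memLp_finsetSum _ fun i _ ↦ (hL2 i).const_mul (A j i)).integrable_sq]
  simp only [integral_sq_sum_mul_of_iIndepFun hindep hL2 hmean, hvar, ← sum_mul]
  simp [trace, mul_apply, sq]

end Noise

section Projection

variable {m k R : Type*} [Fintype m] [Fintype k] [DecidableEq k] [CommRing R]
  (M : Matrix m k R)

theorem transpose_mul_inv_transpose_mul_mul_transpose :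
    (M * (Mᵀ * M)⁻¹ * Mᵀ)ᵀ = M * (Mᵀ * M)⁻¹ * Mᵀ := by
  rw [transpose_mul, transpose_mul, transpose_transpose, transpose_nonsing_inv, transpose_mul,
    transpose_transpose, Matrix.mul_assoc]

variable {M} (hM : IsUnit (Mᵀ * M).det)
include hM

theorem isIdempotentElem_mul_inv_transpose_mul_mul_transpose :
    IsIdempotentElem (M * (Mᵀ * M)⁻¹ * Mᵀ) := by
  simp only [IsIdempotentElem, Matrix.mul_assoc]
  rw [← Matrix.mul_assoc Mᵀ M, mul_nonsing_inv_cancel_left _ _ hM]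

theorem trace_mul_inv_transpose_mul_mul_transpose :
    (M * (Mᵀ * M)⁻¹ * Mᵀ).trace = Fintype.card k := by
  rw [trace_mul_comm, ← Matrix.mul_assoc, mul_nonsing_inv _ hM, trace_one]

theorem trace_mul_transpose_one_sub_mul_inv_transpose_mul_mul_transpose [DecidableEq m] :
    ((1 - M * (Mᵀ * M)⁻¹ * Mᵀ) * (1 - M * (Mᵀ * M)⁻¹ * Mᵀ)ᵀ).trace =
      (Fintype.card m - Fintype.card k : R) := by
  rw [transpose_sub, transpose_one, transpose_mul_inv_transpose_mul_mul_transpose,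
    (isIdempotentElem_mul_inv_transpose_mul_mul_transpose hM).one_sub, trace_sub, trace_one,
    trace_mul_inv_transpose_mul_mul_transpose hM]

end Projection

theorem gmc_mean_square_error_general (n n₁ : ℕ)
    (hn₁n : n₁ < n)
    (M : Matrix (Fin n) (Fin n₁) ℝ)
    (hInv : IsUnit (Mᵀ * M).det)
    (h ε : ℝ)
    (Ω : Type*) [MeasurableSpace Ω] (μ : Measure Ω) [IsProbabilityMeasure μ]
    (ξ : Fin n → Ω → ℝ)
    (hindep : iIndepFun ξ μ)
    (hL2 : ∀ i, MemLp (ξ i) 2 μ)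
    (hmean : ∀ i, ∫ ω, ξ i ω ∂μ = 0)
    (hvar : ∀ i, ∫ ω, (ξ i ω) ^ 2 ∂μ = 2 * h ^ 2 / ε ^ 2)
    (P : Matrix (Fin n) (Fin n) ℝ) (hP : P = M * (Mᵀ * M)⁻¹ * Mᵀ) :
    (∫ ω, (∑ i, (ξ i ω) ^ 2) ∂μ) = 2 * n * h ^ 2 / ε ^ 2 ∧
    (∫ ω, (∑ j, ((1 - P).mulVec (fun i => ξ i ω) j) ^ 2) ∂μ) =
      2 * ((n - n₁ : ℕ) : ℝ) * h ^ 2 / ε ^ 2 := by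
  subst hP
  constructor
  · rw [integral_finsetSum _ fun i _ ↦ (hL2 i).integrable_sq]
    simp only [hvar, sum_const, card_univ, Fintype.card_fin, nsmul_eq_mul]
    ring
  · rw [integral_sum_sq_mulVec_of_iIndepFun hindep hL2 hmean hvar,
      trace_mul_transpose_one_sub_mul_inv_transpose_mul_mul_transpose hInv]
    simp only [Fintype.card_fin, Nat.cast_sub hn₁n.le]
    ring

/-- Mean squared error before and after consistency post-processing: for independent
mean-zero noise variables with variance `2h²/ε²`, the expected total squared noise is
`2n h²/ε²`, and the expected squared Euclidean norm of the projected noise `(I - P) ξ`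
is `2(n - n₁) h²/ε²`, where `n - n₁` is the number of leaves. -/
theorem gmc_mean_square_error (n n₁ : ℕ) [NeZero n]
    (f : Fin n → Fin n) (hf0 : f 0 = 0) (hf : ∀ i : Fin n, i ≠ 0 → f i < i)
    (hn₁ : 1 ≤ n₁) (hn₁n : n₁ < n)
    (hleaf : ∀ i : Fin n, (∃ j : Fin n, j ≠ 0 ∧ f j = i) ↔ (i : ℕ) < n₁)
    (M : Matrix (Fin n) (Fin n₁) ℝ)
    (hM : ∀ (i : Fin n) (j : Fin n₁), M i j =
      if (i : ℕ) = (j : ℕ) then 1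
      else if i ≠ 0 ∧ (j : ℕ) = (f i : ℕ) then -1 else 0)
    (hInv : IsUnit (Mᵀ * M).det)
    (h ε : ℝ) (hh : 0 < h) (hε : 0 < ε)
    (Ω : Type*) [MeasurableSpace Ω] (μ : Measure Ω) [IsProbabilityMeasure μ]
    (ξ : Fin n → Ω → ℝ)
    (hindep : iIndepFun ξ μ)
    (hL2 : ∀ i, MemLp (ξ i) 2 μ)
    (hmean : ∀ i, ∫ ω, ξ i ω ∂μ = 0)
    (hvar : ∀ i, ∫ ω, (ξ i ω) ^ 2 ∂μ = 2 * h ^ 2 / ε ^ 2)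
    (P : Matrix (Fin n) (Fin n) ℝ) (hP : P = M * (Mᵀ * M)⁻¹ * Mᵀ) :
    (∫ ω, (∑ i, (ξ i ω) ^ 2) ∂μ) = 2 * n * h ^ 2 / ε ^ 2 ∧
    (∫ ω, (∑ j, ((1 - P).mulVec (fun i => ξ i ω) j) ^ 2) ∂μ) =
      2 * ((n - n₁ : ℕ) : ℝ) * h ^ 2 / ε ^ 2 :=
  gmc_mean_square_error_general n n₁ hn₁n M hInv h ε Ω μ ξ hindep hL2 hmean hvar P hP
end

section
/- There exist an orthogonal matrix Q ∈ ℝ^{n×n} (QᵀQ = I), node weights w' : Fin n₁ → ℝ with w' i ≠ 0 for all i, and edge weights u' : Fin n₁ → ℝ with u' i ≠ 0 for all i ≠ 0, such that M_T = Q · B, where B is the n×n₁ matrix whose top n₁ rows form the Generation Matrix G'(w',u') of the 1-order subtree T⁽¹⁾ and whose remaining n − n₁ rows are all zero. -/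
/-!
Both `M_T` and the zero-padded generation matrix `B = G(w, u)` are of the form "`a i` at
`(i, i)`, `-b i` at `(i, f i)`", and the Gram matrix of such a matrix is
`a j ^ 2 + ∑_{i child of j} b i ^ 2` on the diagonal and `-a j b j` at `(j, f j)`. So
`Mᵀ M = Bᵀ B` as soon as `w j u j = 1` and `w j ^ 2 + ∑_{i child of j} u i ^ 2 = 1 + #children`,
with `u i = 0` for the leaves; these equations are solved from the leaves up with `w j ≥ 1`.
The top block of `B` is lower triangular with diagonal `w`, hence invertible, so
`M G⁻¹` has orthonormal columns; extending them to an orthonormal basis gives `Q`.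
-/

open Matrix Finset

section OrthogonalExtension

variable {ι κ : Type*} [Fintype ι]

theorem orthonormal_toLp_transpose_of_transpose_mul_self_eq_one [DecidableEq κ]
    {N : Matrix ι κ ℝ} (hN : Nᵀ * N = 1) : Orthonormal ℝ fun k => WithLp.toLp 2 (Nᵀ k) := by
  rw [orthonormal_iff_ite]
  intro j k
  simpa [EuclideanSpace.inner_toLp_toLp, mul_apply, dotProduct, mul_comm, one_apply] using
    congrFun (congrFun hN j) k

theorem exists_transpose_mul_self_eq_one_submatrix_eq [DecidableEq ι] [DecidableEq κ]
    (e : κ ↪ ι) {N : Matrix ι κ ℝ} (hN : Nᵀ * N = 1) :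
    ∃ Q : Matrix ι ι ℝ, Qᵀ * Q = 1 ∧ Q.submatrix id e = N := by
  set v : ι → EuclideanSpace ℝ ι := Function.extend e (fun k => WithLp.toLp 2 (Nᵀ k)) 0
  have hv : Orthonormal ℝ ((Set.range e).domRestrict v) := by
    have : (Set.range e).domRestrict v =
        (fun k => WithLp.toLp 2 (Nᵀ k)) ∘ (Equiv.ofInjective e e.injective).symm := by
      ext ⟨_, k, rfl⟩
      simp [v, Set.domRestrict_apply, e.injective.extend_apply]
    rw [this]
    exact (orthonormal_toLp_transpose_of_transpose_mul_self_eq_one hN).comp _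
      (Equiv.injective _)
  obtain ⟨b, hb⟩ := hv.exists_orthonormalBasis_extension_of_card_eq (by simp)
  refine ⟨(EuclideanSpace.basisFun ι ℝ).toBasis.toMatrix b, ?_, ?_⟩
  · simpa [conjTranspose_eq_transpose_of_trivial] using
      (EuclideanSpace.basisFun ι ℝ).toMatrix_orthonormalBasis_conjTranspose_mul_self b
  · ext i k
    simp [Module.Basis.toMatrix_apply, hb _ (Set.mem_range_self k), v,
      e.injective.extend_apply]

theorem mul_eq_submatrix_mul_submatrix_of_notMem_range [Fintype κ] {α μ R : Type*}
    [NonUnitalNonAssocSemiring R] (e : κ ↪ ι) {B : Matrix ι μ R} (hB : ∀ i ∉ Set.range e, B i = 0)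
    (X : Matrix α ι R) : X * B = X.submatrix id e * B.submatrix e id := by
  ext a j
  simp only [mul_apply, submatrix_apply, id]
  exact (Fintype.sum_of_injective e e.injective _ _ (fun i hi => by simp [hB i hi])
    (fun _ => rfl)).symm

theorem exists_orthogonal_mul_eq_of_transpose_mul_self_eq [DecidableEq ι] [Fintype κ]
    [DecidableEq κ] (e : κ ↪ ι) {M B : Matrix ι κ ℝ} (hB : ∀ i ∉ Set.range e, B i = 0)
    (hG : IsUnit (B.submatrix e id).det) (hMB : Mᵀ * M = Bᵀ * B) :
    ∃ Q : Matrix ι ι ℝ, Qᵀ * Q = 1 ∧ M = Q * B := by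
  set G := B.submatrix e id
  have hN : (M * G⁻¹)ᵀ * (M * G⁻¹) = 1 := by
    rw [transpose_mul, Matrix.mul_assoc, ← Matrix.mul_assoc Mᵀ, hMB,
      mul_eq_submatrix_mul_submatrix_of_notMem_range e hB,
      show Bᵀ.submatrix id e = Gᵀ from rfl, Matrix.mul_assoc Gᵀ, mul_nonsing_inv _ hG,
      Matrix.mul_one, ← transpose_mul, mul_nonsing_inv _ hG, transpose_one]
  obtain ⟨Q, hQ, hQN⟩ := exists_transpose_mul_self_eq_one_submatrix_eq e hN
  exact ⟨Q, hQ, by rw [mul_eq_submatrix_mul_submatrix_of_notMem_range e hB, hQN,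
    Matrix.mul_assoc, nonsing_inv_mul _ hG, Matrix.mul_one]⟩

end OrthogonalExtension

section GenerationMatrix

variable {n : ℕ} [NeZero n]

def children (f : Fin n → Fin n) (j : Fin n) : Finset (Fin n) := {i | i ≠ 0 ∧ f i = j}

def generationMatrix {R : Type*} [Neg R] [Zero R] (f : Fin n → Fin n) (a b : Fin n → R) :
    Matrix (Fin n) (Fin n) R :=
  of fun i j => if i = j then a i else if i ≠ 0 ∧ j = f i then -b i else 0

variable {R : Type*} [CommRing R] {f : Fin n → Fin n}

theorem generationMatrix_apply (hf : ∀ i, i ≠ 0 → f i < i) (a b : Fin n → R) (i j : Fin n) :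
    generationMatrix f a b i j =
      (if i = j then a i else 0) - if i ≠ 0 ∧ f i = j then b i else 0 := by
  by_cases hij : i = j
  · subst hij
    have : ¬(i ≠ 0 ∧ f i = i) := fun h => (hf i h.1).ne h.2
    simp [generationMatrix, this]
  · simp only [generationMatrix, of_apply, if_neg hij, zero_sub, eq_comm (a := j)]
    split_ifs <;> simp

theorem generationMatrix_isLowerTriangular (hf : ∀ i, i ≠ 0 → f i < i) (a b : Fin n → R) :
    (generationMatrix f a b).IsLowerTriangular := by
  intro i j (hij : i < j)
  have : ¬(i ≠ 0 ∧ f i = j) := fun h => ((hf i h.1).trans hij).ne h.2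
  simp [generationMatrix_apply hf, hij.ne, this]

theorem det_generationMatrix_submatrix (hf : ∀ i, i ≠ 0 → f i < i) (a b : Fin n → R) {m : ℕ}
    (e : Fin m ↪o Fin n) : ((generationMatrix f a b).submatrix e e).det = ∏ i, a (e i) := by
  rw [det_of_isLowerTriangular ((generationMatrix f a b).submatrix e e) fun i j hij =>
    generationMatrix_isLowerTriangular hf a b (e.lt_iff_lt.mpr hij)]
  simp [generationMatrix]

theorem transpose_mul_self_generationMatrix_apply (hf : ∀ i, i ≠ 0 → f i < i)
    (a b : Fin n → R) (j k : Fin n) :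
    ((generationMatrix f a b)ᵀ * generationMatrix f a b) j k =
      (if j = k then a j ^ 2 + ∑ i ∈ children f j, b i ^ 2 else 0)
        - (if j ≠ 0 ∧ f j = k then a j * b j else 0)
        - (if k ≠ 0 ∧ f k = j then a k * b k else 0) := by
  have hAA : ∑ i, (if i = j then a i else 0) * (if i = k then a i else 0) =
      if j = k then a j ^ 2 else 0 := by
    rw [Fintype.sum_eq_single j fun i hi => by simp [hi]]
    simp [sq]
  have hAB : ∀ x y : Fin n,
      ∑ i, (if i = x then a i else 0) * (if i ≠ 0 ∧ f i = y then b i else 0) =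
        if x ≠ 0 ∧ f x = y then a x * b x else 0 := by
    intro x y
    rw [Fintype.sum_eq_single x fun i hi => by simp [hi]]
    simp
  have hBB : ∑ i, (if i ≠ 0 ∧ f i = j then b i else 0) * (if i ≠ 0 ∧ f i = k then b i else 0) =
      if j = k then ∑ i ∈ children f j, b i ^ 2 else 0 := by
    split_ifs with hjk
    · subst hjk
      rw [children, sum_filter]
      exact sum_congr rfl fun i _ => by split_ifs <;> simp [sq]
    · refine sum_eq_zero fun i _ => ?_
      split_ifs with h1 h2 <;> simp_all
  simp only [mul_apply, transpose_apply, generationMatrix_apply hf, sub_mul, mul_sub,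
    sum_sub_distrib, hAA, hAB, hBB]
  simp only [mul_comm (if _ then b _ else 0), hAB]
  split_ifs <;> ring

end GenerationMatrix

section Weights

variable {n : ℕ} [NeZero n]

/-- Summing over `Ioi j` rather than over `children f j` makes the recursion well founded
for every `f`; the two agree when `f i < i` (`nodeWeightSq_eq`). -/
noncomputable def nodeWeightSq (f : Fin n → Fin n) (n₁ : ℕ) (j : Fin n) : ℝ :=
  1 + ∑ i ∈ (Ioi j).attach,
    if f i = j then (if (i : ℕ) < n₁ then 1 - (nodeWeightSq f n₁ i)⁻¹ else 1) else 0
termination_by n - j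
decreasing_by have := mem_Ioi.mp i.2; omega

variable {f : Fin n → Fin n}

theorem nodeWeightSq_eq (hf : ∀ i, i ≠ 0 → f i < i) (n₁ : ℕ) (j : Fin n) :
    nodeWeightSq f n₁ j =
      1 + ∑ i ∈ children f j, if (i : ℕ) < n₁ then 1 - (nodeWeightSq f n₁ i)⁻¹ else 1 := by
  rw [nodeWeightSq, sum_attach (Ioi j) fun i =>
    if f i = j then (if (i : ℕ) < n₁ then 1 - (nodeWeightSq f n₁ i)⁻¹ else 1) else 0,
    ← sum_filter]
  congr 2
  ext i
  simp only [children, mem_filter, mem_Ioi, mem_univ, true_and]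
  constructor
  · rintro ⟨hji, rfl⟩
    exact ⟨((Fin.zero_le _).trans_lt hji).ne', rfl⟩
  · rintro ⟨hi, rfl⟩
    exact ⟨hf i hi, rfl⟩

theorem one_le_nodeWeightSq (hf : ∀ i, i ≠ 0 → f i < i) (n₁ : ℕ) (j : Fin n) :
    1 ≤ nodeWeightSq f n₁ j := by
  induction j using WellFoundedGT.induction with
  | _ j ih =>
  rw [nodeWeightSq_eq hf]
  refine le_add_of_nonneg_right (sum_nonneg fun i hi => ?_)
  have hji : j < i := by
    obtain ⟨hi0, rfl⟩ := (mem_filter.mp hi).2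
    exact hf i hi0
  split_ifs
  · exact sub_nonneg.mpr (inv_le_one_of_one_le₀ (ih i hji))
  · exact zero_le_one

theorem nodeWeightSq_add_sum_inv (hf : ∀ i, i ≠ 0 → f i < i) (n₁ : ℕ) (j : Fin n) :
    nodeWeightSq f n₁ j +
        ∑ i ∈ children f j, (if (i : ℕ) < n₁ then (nodeWeightSq f n₁ i)⁻¹ else 0) =
      1 + #(children f j) := by
  rw [nodeWeightSq_eq hf, add_assoc, ← sum_add_distrib, card_eq_sum_ones, Nat.cast_sum]
  congr 1
  refine sum_congr rfl fun i _ => ?_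
  split_ifs <;> simp

variable (f) (n₁ : ℕ)

noncomputable def nodeWeight (i : Fin n) : ℝ :=
  if (i : ℕ) < n₁ then √(nodeWeightSq f n₁ i) else 0

/-- Vanishes, like `nodeWeight`, from index `n₁` on, since `0⁻¹ = 0`. -/
noncomputable def edgeWeight (i : Fin n) : ℝ := (nodeWeight f n₁ i)⁻¹

variable {f n₁}

theorem nodeWeight_pos (hf : ∀ i, i ≠ 0 → f i < i) {i : Fin n} (hi : (i : ℕ) < n₁) :
    0 < nodeWeight f n₁ i := by
  rw [nodeWeight, if_pos hi]
  exact Real.sqrt_pos.mpr (zero_lt_one.trans_le (one_le_nodeWeightSq hf n₁ i))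

theorem generationMatrix_nodeWeight_row_eq_zero {i : Fin n} (hi : ¬(i : ℕ) < n₁) :
    generationMatrix f (nodeWeight f n₁) (edgeWeight f n₁) i = 0 := by
  ext j
  simp [generationMatrix, edgeWeight, nodeWeight, hi]

theorem transpose_mul_self_generationMatrix_nodeWeight_apply (hf : ∀ i, i ≠ 0 → f i < i)
    {j k : Fin n} (hj : (j : ℕ) < n₁) (hk : (k : ℕ) < n₁) :
    ((generationMatrix f (nodeWeight f n₁) (edgeWeight f n₁))ᵀ *
        generationMatrix f (nodeWeight f n₁) (edgeWeight f n₁)) j k =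
      ((generationMatrix f 1 1)ᵀ * generationMatrix f 1 1 : Matrix (Fin n) (Fin n) ℝ) j k := by
  have hwu : ∀ i : Fin n, (i : ℕ) < n₁ → nodeWeight f n₁ i * edgeWeight f n₁ i = 1 :=
    fun i hi => mul_inv_cancel₀ (nodeWeight_pos hf hi).ne'
  have hsq : ∀ i : Fin n, edgeWeight f n₁ i ^ 2 =
      if (i : ℕ) < n₁ then (nodeWeightSq f n₁ i)⁻¹ else 0 := by
    intro i
    split_ifs with hi
    · rw [edgeWeight, nodeWeight, if_pos hi, inv_pow,
        Real.sq_sqrt (zero_le_one.trans (one_le_nodeWeightSq hf n₁ i))]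
    · simp [edgeWeight, nodeWeight, hi]
  have hdiag : nodeWeight f n₁ j ^ 2 + ∑ i ∈ children f j, edgeWeight f n₁ i ^ 2 =
      1 + #(children f j) := by
    rw [nodeWeight, if_pos hj, Real.sq_sqrt (zero_le_one.trans (one_le_nodeWeightSq hf n₁ j)),
      ← nodeWeightSq_add_sum_inv hf n₁]
    simp only [hsq]
  simp only [transpose_mul_self_generationMatrix_apply hf, hdiag, hwu j hj, hwu k hk]
  simp

end Weights

theorem consistencyMatrix_LO_QR_general (n n₁ : ℕ) [NeZero n]
    (f : Fin n → Fin n) (hf : ∀ i : Fin n, i ≠ 0 → f i < i)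
    (hn₁n : n₁ < n)
    (M : Matrix (Fin n) (Fin n₁) ℝ)
    (hM : ∀ (i : Fin n) (j : Fin n₁), M i j =
      if (i : ℕ) = (j : ℕ) then 1
      else if i ≠ 0 ∧ (j : ℕ) = (f i : ℕ) then -1 else 0) :
    ∃ (Q : Matrix (Fin n) (Fin n) ℝ) (w' u' : Fin n₁ → ℝ),
      Qᵀ * Q = 1 ∧
      (∀ i : Fin n₁, w' i ≠ 0) ∧
      (∀ i : Fin n₁, (i : ℕ) ≠ 0 → u' i ≠ 0) ∧
      M = Q * Matrix.of (fun (i : Fin n) (j : Fin n₁) =>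
        if hi : (i : ℕ) < n₁ then
          (if (i : ℕ) = (j : ℕ) then w' ⟨i, hi⟩
           else if i ≠ 0 ∧ (j : ℕ) = (f i : ℕ) then -u' ⟨i, hi⟩ else 0)
        else 0) := by
  set e : Fin n₁ ↪o Fin n := Fin.castLEOrderEmb hn₁n.le
  have he : ∀ j, (e j : ℕ) = j := fun _ => rfl
  set G := generationMatrix f (nodeWeight f n₁) (edgeWeight f n₁)
  have hMT : M = (generationMatrix f 1 1).submatrix id e := by
    ext i j
    simp only [hM, generationMatrix, submatrix_apply, of_apply, id, Pi.one_apply, Fin.ext_iff, he]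
  have hrows : ∀ i ∉ Set.range e.toEmbedding, G.submatrix id e i = 0 := fun i hi => by
    ext j
    exact congrFun (generationMatrix_nodeWeight_row_eq_zero fun h => hi ⟨⟨i, h⟩, rfl⟩) (e j)
  have hdet : IsUnit ((G.submatrix id e).submatrix e.toEmbedding id).det := by
    rw [submatrix_submatrix, Function.id_comp, Function.comp_id,
      show G.submatrix e.toEmbedding e = G.submatrix e e from rfl,
      det_generationMatrix_submatrix hf, isUnit_iff_ne_zero]
    exact prod_ne_zero_iff.mpr fun j _ => (nodeWeight_pos hf j.2).ne'
  have hgram : Mᵀ * M = (G.submatrix id e)ᵀ * G.submatrix id e := by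
    ext j k
    rw [hMT, transpose_submatrix, transpose_submatrix, ← submatrix_mul _ _ _ _ _
      Function.bijective_id, ← submatrix_mul _ _ _ _ _ Function.bijective_id]
    exact (transpose_mul_self_generationMatrix_nodeWeight_apply hf j.2 k.2).symm
  obtain ⟨Q, hQ, hMQ⟩ := exists_orthogonal_mul_eq_of_transpose_mul_self_eq _ hrows hdet hgram
  refine ⟨Q, fun j => nodeWeight f n₁ (e j), fun j => edgeWeight f n₁ (e j), hQ,
    fun j => (nodeWeight_pos hf j.2).ne', fun j _ => inv_ne_zero (nodeWeight_pos hf j.2).ne', ?_⟩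
  convert hMQ using 2
  ext i j
  by_cases hi : (i : ℕ) < n₁
  · have hei : e ⟨i, hi⟩ = i := rfl
    simp only [hi, hei, G, generationMatrix, submatrix_apply, of_apply, dif_pos, id, Fin.ext_iff,
      he]
  · simp [hi, G, generationMatrix_nodeWeight_row_eq_zero hi]

/-- "LO"-QR decomposition of the consistency constraint matrix: `M_T = Q ⬝ B` for some
orthogonal `Q`, where the top `n₁` rows of `B` form a Generation Matrix of the `1`-order
subtree and the remaining rows are zero. -/
theorem consistencyMatrix_LO_QR (n n₁ : ℕ) [NeZero n]
    (f : Fin n → Fin n) (hf0 : f 0 = 0) (hf : ∀ i : Fin n, i ≠ 0 → f i < i)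
    (hn₁ : 1 ≤ n₁) (hn₁n : n₁ < n)
    (hleaf : ∀ i : Fin n, (∃ j : Fin n, j ≠ 0 ∧ f j = i) ↔ (i : ℕ) < n₁)
    (M : Matrix (Fin n) (Fin n₁) ℝ)
    (hM : ∀ (i : Fin n) (j : Fin n₁), M i j =
      if (i : ℕ) = (j : ℕ) then 1
      else if i ≠ 0 ∧ (j : ℕ) = (f i : ℕ) then -1 else 0) :
    ∃ (Q : Matrix (Fin n) (Fin n) ℝ) (w' u' : Fin n₁ → ℝ),
      Qᵀ * Q = 1 ∧
      (∀ i : Fin n₁, w' i ≠ 0) ∧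
      (∀ i : Fin n₁, (i : ℕ) ≠ 0 → u' i ≠ 0) ∧
      M = Q * Matrix.of (fun (i : Fin n) (j : Fin n₁) =>
        if hi : (i : ℕ) < n₁ then
          (if (i : ℕ) = (j : ℕ) then w' ⟨i, hi⟩
           else if i ≠ 0 ∧ (j : ℕ) = (f i : ℕ) then -u' ⟨i, hi⟩ else 0)
        else 0) :=
  consistencyMatrix_LO_QR_general n n₁ f hf hn₁n M hM
end

section
/- Inner-product equivalence: there exist node weights w' : Fin n₁ → ℝ with w' i ≠ 0 for all i and edge weights u' : Fin n₁ → ℝ with u' i ≠ 0 for all i ≠ 0 such that the Generation Matrix G' = G'(w',u') of the 1-order subtree T⁽¹⁾ satisfies M_Tᵀ · M_T = G'ᵀ · G'. -/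
open Matrix Finset

/-! Both Gram matrices are supported on the diagonal and on parent–child pairs. Off the diagonal
`MᵀM` has `-1` at each edge and `G'ᵀG'` has `-w' a * u' a`, which forces `u' = w'⁻¹`. On the
diagonal `(MᵀM) a a = 1 + #(children of a in T)`, while `(G'ᵀG') a a = w' a ^ 2 + ∑ u' c ^ 2` over
the children `c` of `a` in `T⁽¹⁾`. So `s = w' ^ 2` must satisfy
`s a = 1 + #(children in T) - ∑ (s c)⁻¹`, a recursion from the leaves up since children have larger
indices. Inductively `s c ≥ 1`, and `a` has at least as many children in `T` as in `T⁽¹⁾`,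
so `s a ≥ 1` and `w' = √s` is a valid choice. -/

section EdgeMatrix

variable {ι κ : Type*} [Fintype ι] [DecidableEq ι]

def edgeMatrix (e : κ → ι) (P : ι → κ → Prop) [DecidableRel P] (x : κ → ℝ) (y : ι → ℝ) :
    Matrix ι κ ℝ :=
  of fun i j => if i = e j then x j else if P i j then -y i else 0

variable {e : κ → ι} {P : ι → κ → Prop} [DecidableRel P] (x : κ → ℝ) (y : ι → ℝ)

theorem gram_edgeMatrix_apply_self (hP : ∀ j, ¬ P (e j) j) (a : κ) :
    ((edgeMatrix e P x y)ᵀ * edgeMatrix e P x y) a a = x a ^ 2 + ∑ i with P i a, y i ^ 2 := by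
  have hsq : ∀ i, edgeMatrix e P x y i a * edgeMatrix e P x y i a =
      (if i = e a then x a ^ 2 else 0) + if P i a then y i ^ 2 else 0 := by
    intro i
    by_cases hi : i = e a
    · simp [edgeMatrix, hi, hP, sq]
    · simp only [edgeMatrix, of_apply, hi, if_false, zero_add]
      split_ifs <;> ring
  simp only [mul_apply, transpose_apply, hsq, sum_add_distrib, sum_ite_eq', mem_univ, if_true,
    sum_filter]

theorem gram_edgeMatrix_apply_of_ne (he : Function.Injective e)
    (hP : ∀ i j k, P i j → P i k → j = k) {a b : κ} (hab : a ≠ b) :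
    ((edgeMatrix e P x y)ᵀ * edgeMatrix e P x y) a b =
      -(if P (e a) b then x a * y (e a) else 0) - if P (e b) a then x b * y (e b) else 0 := by
  have hprod : ∀ i, edgeMatrix e P x y i a * edgeMatrix e P x y i b =
      (if i = e a then -(if P (e a) b then x a * y (e a) else 0) else 0) +
        if i = e b then -(if P (e b) a then x b * y (e b) else 0) else 0 := by
    intro i
    have heab : e a ≠ e b := he.ne hab
    by_cases hia : i = e a
    · subst hia
      simp only [edgeMatrix, of_apply, ↓reduceIte, heab, mul_ite, mul_neg, mul_zero, add_zero]
      split_ifs <;> ring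
    by_cases hib : i = e b
    · subst hib
      simp only [edgeMatrix, of_apply, heab.symm, ↓reduceIte, ite_mul, neg_mul, zero_mul, zero_add]
      split_ifs <;> ring
    simp only [edgeMatrix, of_apply, hia, hib, if_false, add_zero]
    split_ifs with h₁ h₂ <;> first | exact absurd (hP i a b h₁ h₂) hab | ring
  simp only [mul_apply, transpose_apply, hprod, sum_add_distrib, sum_ite_eq', mem_univ, if_true]
  ring

end EdgeMatrix

section TreePivot

variable {κ : Type*} [LT κ] [DecidableLT κ] [WellFoundedGT κ] (C : κ → Finset κ) (d : κ → ℝ)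

noncomputable def treePivot : κ → ℝ :=
  WellFoundedGT.fix fun a s => d a - ∑ c ∈ C a, if h : a < c then (s c h)⁻¹ else 0

theorem treePivot_eq (a : κ) :
    treePivot C d a = d a - ∑ c ∈ C a with a < c, (treePivot C d c)⁻¹ := by
  rw [treePivot, WellFoundedGT.fix_eq, sum_filter]
  simp only [dite_eq_ite]

theorem one_le_treePivot (hd : ∀ a, #(C a) + 1 ≤ d a) (a : κ) : 1 ≤ treePivot C d a := by
  induction a using WellFoundedGT.induction with
  | _ a ih =>
    have hsum : ∑ c ∈ C a with a < c, (treePivot C d c)⁻¹ ≤ #(C a) :=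
      calc ∑ c ∈ C a with a < c, (treePivot C d c)⁻¹
          ≤ ∑ c ∈ C a with a < c, (1 : ℝ) :=
            sum_le_sum fun c hc => inv_le_one_of_one_le₀ (ih c (mem_filter.1 hc).2)
        _ ≤ #(C a) := by simpa using card_le_card (filter_subset _ _)
    linarith [treePivot_eq C d a, hd a]

theorem treePivot_add_sum_inv {a : κ} (hC : ∀ c ∈ C a, a < c) :
    treePivot C d a + ∑ c ∈ C a, (treePivot C d c)⁻¹ = d a := by
  rw [treePivot_eq, filter_true_of_mem hC]
  ring

end TreePivot

section ConsistencyTree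

variable {n : ℕ} [NeZero n] (f : Fin n → Fin n)

def IsParent {m : ℕ} (i : Fin n) (j : Fin m) : Prop := i ≠ 0 ∧ (j : ℕ) = f i

instance {m : ℕ} : DecidableRel (IsParent f (m := m)) := fun _ _ => instDecidableAnd

variable {f}

theorem IsParent.unique {m : ℕ} {i : Fin n} {j k : Fin m} (hj : IsParent f i j)
    (hk : IsParent f i k) : j = k :=
  Fin.ext (hj.2.trans hk.2.symm)

theorem IsParent.lt (hf : ∀ i : Fin n, i ≠ 0 → f i < i) {m : ℕ} {i : Fin n} {j : Fin m}
    (h : IsParent f i j) : (j : ℕ) < i :=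
  h.2 ▸ hf i h.1

theorem IsParent.lt_of_castLE (hf : ∀ i : Fin n, i ≠ 0 → f i < i) {m : ℕ} {h : m ≤ n}
    {c j : Fin m} (hc : IsParent f (Fin.castLE h c) j) : j < c :=
  Fin.lt_def.2 (by simpa using hc.lt hf)

theorem not_isParent_castLE_self (hf : ∀ i : Fin n, i ≠ 0 → f i < i) {m : ℕ} (h : m ≤ n)
    (j : Fin m) : ¬ IsParent f (Fin.castLE h j) j :=
  fun hj => lt_irrefl j (hj.lt_of_castLE hf)

theorem card_isParent_castLE_le {m : ℕ} (h : m ≤ n) (j : Fin m) :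
    #{c : Fin m | IsParent f (Fin.castLE h c) j} ≤ #{i : Fin n | IsParent f i j} :=
  card_le_card_of_injOn (Fin.castLE h) (fun c hc => by simpa using hc)
    (Fin.castLE_injective h).injOn

theorem edgeMatrix_castLE_isParent_apply {m : ℕ} (h : m ≤ n) (i : Fin n) (j : Fin m) :
    edgeMatrix (Fin.castLE h) (IsParent f) 1 1 i j =
      if (i : ℕ) = (j : ℕ) then 1 else if i ≠ 0 ∧ (j : ℕ) = (f i : ℕ) then -1 else 0 := by
  simp only [edgeMatrix, IsParent, of_apply, Fin.ext_iff, Fin.val_castLE, Pi.one_apply]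

theorem edgeMatrix_id_isParent_castLE_apply {m : ℕ} (h : m ≤ n) (w u : Fin m → ℝ)
    (a b : Fin m) :
    edgeMatrix id (fun c j => IsParent f (Fin.castLE h c) j) w u a b =
      if a = b then w a
      else if (a : ℕ) ≠ 0 ∧ (b : ℕ) = (f (Fin.castLE h a) : ℕ) then -u a else 0 := by
  rcases eq_or_ne a b with rfl | hab
  · simp [edgeMatrix]
  · simp [edgeMatrix, IsParent, hab, Fin.ext_iff, Fin.val_injective.ne hab]

end ConsistencyTree

theorem consistencyMatrix_inner_product_equivalent_general (n n₁ : ℕ) [NeZero n]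
    (f : Fin n → Fin n) (hf : ∀ i : Fin n, i ≠ 0 → f i < i)
    (hn₁n : n₁ < n)
    (M : Matrix (Fin n) (Fin n₁) ℝ)
    (hM : ∀ (i : Fin n) (j : Fin n₁), M i j =
      if (i : ℕ) = (j : ℕ) then 1
      else if i ≠ 0 ∧ (j : ℕ) = (f i : ℕ) then -1 else 0) :
    ∃ (w' u' : Fin n₁ → ℝ) (G' : Matrix (Fin n₁) (Fin n₁) ℝ),
      (∀ i : Fin n₁, w' i ≠ 0) ∧
      (∀ i : Fin n₁, (i : ℕ) ≠ 0 → u' i ≠ 0) ∧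
      (∀ a b : Fin n₁, G' a b =
        if a = b then w' a
        else if (a : ℕ) ≠ 0 ∧ (b : ℕ) = (f (Fin.castLE hn₁n.le a) : ℕ) then -u' a
        else 0) ∧
      Mᵀ * M = G'ᵀ * G' := by
  have hM' : M = edgeMatrix (Fin.castLE hn₁n.le) (IsParent f) 1 1 :=
    ext fun i j => (hM i j).trans (edgeMatrix_castLE_isParent_apply hn₁n.le i j).symm
  set P' : Fin n₁ → Fin n₁ → Prop := fun c a => IsParent f (Fin.castLE hn₁n.le c) a
  set s := treePivot (fun a => {c | P' c a}) fun a => #{i : Fin n | IsParent f i a} + 1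
  have hs : ∀ a, 1 ≤ s a := one_le_treePivot _ _ fun a => by
    exact_mod_cast Nat.add_le_add_right (card_isParent_castLE_le hn₁n.le a) 1
  have hs0 : ∀ a, 0 < √(s a) := fun a => Real.sqrt_pos.2 (by linarith [hs a])
  refine ⟨fun a => √(s a), fun a => (√(s a))⁻¹,
    edgeMatrix id P' (fun a => √(s a)) fun a => (√(s a))⁻¹,
    fun a => (hs0 a).ne', fun a _ => (inv_pos.2 (hs0 a)).ne',
    edgeMatrix_id_isParent_castLE_apply hn₁n.le _ _, ?_⟩
  rw [hM']
  ext a b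
  have hP : ∀ j, ¬ IsParent f (Fin.castLE hn₁n.le j) j := not_isParent_castLE_self hf hn₁n.le
  rcases eq_or_ne a b with rfl | hab
  · rw [gram_edgeMatrix_apply_self _ _ hP, gram_edgeMatrix_apply_self (e := id) (P := P') _ _ hP]
    have hchild : ∀ c ∈ ({c | P' c a} : Finset _), a < c := fun c hc =>
      (mem_filter.1 hc).2.lt_of_castLE hf
    have hsq : ∀ c, (√(s c)) ^ 2 = s c := fun c => Real.sq_sqrt (by linarith [hs c])
    simp only [Pi.one_apply, one_pow, sum_const, nsmul_eq_mul, mul_one, inv_pow, hsq]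
    rw [treePivot_add_sum_inv _ _ hchild, add_comm]
  · rw [gram_edgeMatrix_apply_of_ne (P := IsParent f) _ _ (Fin.castLE_injective _)
        (fun _ _ _ => IsParent.unique) hab,
      gram_edgeMatrix_apply_of_ne (P := P') _ _ Function.injective_id
        (fun _ _ _ => IsParent.unique) hab]
    simp [P', (hs0 a).ne', (hs0 b).ne']

/-- Inner-product equivalence: there is a Generation Matrix `G'` of the `1`-order subtree
with `M_Tᵀ ⬝ M_T = G'ᵀ ⬝ G'`. -/
theorem consistencyMatrix_inner_product_equivalent (n n₁ : ℕ) [NeZero n]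
    (f : Fin n → Fin n) (hf0 : f 0 = 0) (hf : ∀ i : Fin n, i ≠ 0 → f i < i)
    (hn₁ : 1 ≤ n₁) (hn₁n : n₁ < n)
    (hleaf : ∀ i : Fin n, (∃ j : Fin n, j ≠ 0 ∧ f j = i) ↔ (i : ℕ) < n₁)
    (M : Matrix (Fin n) (Fin n₁) ℝ)
    (hM : ∀ (i : Fin n) (j : Fin n₁), M i j =
      if (i : ℕ) = (j : ℕ) then 1
      else if i ≠ 0 ∧ (j : ℕ) = (f i : ℕ) then -1 else 0) :
    ∃ (w' u' : Fin n₁ → ℝ) (G' : Matrix (Fin n₁) (Fin n₁) ℝ),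
      (∀ i : Fin n₁, w' i ≠ 0) ∧
      (∀ i : Fin n₁, (i : ℕ) ≠ 0 → u' i ≠ 0) ∧
      (∀ a b : Fin n₁, G' a b =
        if a = b then w' a
        else if (a : ℕ) ≠ 0 ∧ (b : ℕ) = (f (Fin.castLE hn₁n.le a) : ℕ) then -u' a
        else 0) ∧
      Mᵀ * M = G'ᵀ * G' :=
  consistencyMatrix_inner_product_equivalent_general n n₁ f hf hn₁n M hM
end
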